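/- arXiv:1701.04388 — 8 statements merged into one kernel-verified Lean document; each statement's English description precedes it below -/
import Mathlib

section
/- Let g : [0,∞)^5 → [0,∞) be continuous, monotone in each coordinate (if x_i ≤ y_i for i=1,...,5 then g(x_1,...,x_5) ≤ g(y_1,...,y_5)), subhomogeneous (g(αx_1,...,αx_5) ≤ α·g(x_1,...,x_5) for all α ≥ 0), and satisfy g(1,1,1,0,2) ≤ 1 and g(1,1,1,1,1) ≤ 1 and g(1,1,1,2,0) ≤ 1. If u, v ∈ [0,∞) satisfy u < max{g(v,v,u,v,u), g(v,u,v,v+u,0)}, then u < v. -/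
section Subhomogeneous

variable {g : ℝ → ℝ → ℝ → ℝ → ℝ → ℝ}

theorem apply_le_mul_apply_of_le_mul
    (hg_mono : ∀ x₁ x₂ x₃ x₄ x₅ y₁ y₂ y₃ y₄ y₅ : ℝ,
      0 ≤ x₁ → 0 ≤ x₂ → 0 ≤ x₃ → 0 ≤ x₄ → 0 ≤ x₅ →
      x₁ ≤ y₁ → x₂ ≤ y₂ → x₃ ≤ y₃ → x₄ ≤ y₄ → x₅ ≤ y₅ →
      g x₁ x₂ x₃ x₄ x₅ ≤ g y₁ y₂ y₃ y₄ y₅)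
    (hg_subhom : ∀ α x₁ x₂ x₃ x₄ x₅ : ℝ, 0 ≤ α →
      0 ≤ x₁ → 0 ≤ x₂ → 0 ≤ x₃ → 0 ≤ x₄ → 0 ≤ x₅ →
      g (α * x₁) (α * x₂) (α * x₃) (α * x₄) (α * x₅) ≤ α * g x₁ x₂ x₃ x₄ x₅)
    {α x₁ x₂ x₃ x₄ x₅ c₁ c₂ c₃ c₄ c₅ : ℝ} (hα : 0 ≤ α)
    (hx₁ : 0 ≤ x₁) (hx₂ : 0 ≤ x₂) (hx₃ : 0 ≤ x₃) (hx₄ : 0 ≤ x₄) (hx₅ : 0 ≤ x₅)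
    (hc₁ : 0 ≤ c₁) (hc₂ : 0 ≤ c₂) (hc₃ : 0 ≤ c₃) (hc₄ : 0 ≤ c₄) (hc₅ : 0 ≤ c₅)
    (h₁ : x₁ ≤ α * c₁) (h₂ : x₂ ≤ α * c₂) (h₃ : x₃ ≤ α * c₃) (h₄ : x₄ ≤ α * c₄)
    (h₅ : x₅ ≤ α * c₅) :
    g x₁ x₂ x₃ x₄ x₅ ≤ α * g c₁ c₂ c₃ c₄ c₅ :=
  (hg_mono _ _ _ _ _ _ _ _ _ _ hx₁ hx₂ hx₃ hx₄ hx₅ h₁ h₂ h₃ h₄ h₅).trans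
    (hg_subhom α c₁ c₂ c₃ c₄ c₅ hα hc₁ hc₂ hc₃ hc₄ hc₅)

end Subhomogeneous

theorem stmt_0_general (g : ℝ → ℝ → ℝ → ℝ → ℝ → ℝ)
    (hg_mono : ∀ x₁ x₂ x₃ x₄ x₅ y₁ y₂ y₃ y₄ y₅ : ℝ,
      0 ≤ x₁ → 0 ≤ x₂ → 0 ≤ x₃ → 0 ≤ x₄ → 0 ≤ x₅ →
      x₁ ≤ y₁ → x₂ ≤ y₂ → x₃ ≤ y₃ → x₄ ≤ y₄ → x₅ ≤ y₅ →
      g x₁ x₂ x₃ x₄ x₅ ≤ g y₁ y₂ y₃ y₄ y₅)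
    (hg_subhom : ∀ α x₁ x₂ x₃ x₄ x₅ : ℝ, 0 ≤ α →
      0 ≤ x₁ → 0 ≤ x₂ → 0 ≤ x₃ → 0 ≤ x₄ → 0 ≤ x₅ →
      g (α * x₁) (α * x₂) (α * x₃) (α * x₄) (α * x₅) ≤ α * g x₁ x₂ x₃ x₄ x₅)
    (h2 : g 1 1 1 1 1 ≤ 1) (h3 : g 1 1 1 2 0 ≤ 1)
    (u v : ℝ) (hu : 0 ≤ u) (hv : 0 ≤ v)
    (huv : u < max (g v v u v u) (g v u v (v + u) 0)) :
    u < v := by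
  by_contra! hvu
  have hfirst : g v v u v u ≤ u * g 1 1 1 1 1 := by
    apply apply_le_mul_apply_of_le_mul hg_mono hg_subhom hu <;> linarith
  have hsecond : g v u v (v + u) 0 ≤ u * g 1 1 1 2 0 := by
    apply apply_le_mul_apply_of_le_mul hg_mono hg_subhom hu <;> linarith
  refine huv.not_ge (max_le ?_ ?_)
  · exact hfirst.trans (mul_le_of_le_one_right hu h2)
  · exact hsecond.trans (mul_le_of_le_one_right hu h3)

theorem stmt_0 (g : ℝ → ℝ → ℝ → ℝ → ℝ → ℝ)
    (hg_cont : Continuous (fun p : ℝ × ℝ × ℝ × ℝ × ℝ => g p.1 p.2.1 p.2.2.1 p.2.2.2.1 p.2.2.2.2))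
    (hg_mono : ∀ x₁ x₂ x₃ x₄ x₅ y₁ y₂ y₃ y₄ y₅ : ℝ,
      0 ≤ x₁ → 0 ≤ x₂ → 0 ≤ x₃ → 0 ≤ x₄ → 0 ≤ x₅ →
      x₁ ≤ y₁ → x₂ ≤ y₂ → x₃ ≤ y₃ → x₄ ≤ y₄ → x₅ ≤ y₅ →
      g x₁ x₂ x₃ x₄ x₅ ≤ g y₁ y₂ y₃ y₄ y₅)
    (hg_subhom : ∀ α x₁ x₂ x₃ x₄ x₅ : ℝ, 0 ≤ α →
      0 ≤ x₁ → 0 ≤ x₂ → 0 ≤ x₃ → 0 ≤ x₄ → 0 ≤ x₅ →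
      g (α * x₁) (α * x₂) (α * x₃) (α * x₄) (α * x₅) ≤ α * g x₁ x₂ x₃ x₄ x₅)
    (h1 : g 1 1 1 0 2 ≤ 1) (h2 : g 1 1 1 1 1 ≤ 1) (h3 : g 1 1 1 2 0 ≤ 1)
    (u v : ℝ) (hu : 0 ≤ u) (hv : 0 ≤ v)
    (huv : u < max (g v v u v u) (g v u v (v + u) 0)) :
    u < v :=
  stmt_0_general g hg_mono hg_subhom h2 h3 u v hu hv huv
end

section
/- Let (X,d) be a complete metric space, β ∈ (0,1), ψ an altering distance function, and T : X → X a mapping such that ψ(d(Tx,Ty)) ≤ β·ψ(d(x,y)) for all x, y ∈ X. Then T has a unique fixed point a ∈ X, and for each x ∈ X, T^n x → a as n → ∞. -/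
/-!
The contraction `ψ (d (T x) (T y)) ≤ β ψ (d x y)` forces `T` to be nonexpansive and
`ψ (d (Tⁿ x) (Tⁿ y)) ≤ βⁿ ψ (d x y) → 0`, so any two orbits are asymptotic. Continuity of `ψ`
at `ε > 0` upgrades nonexpansiveness to a Meir–Keeler type condition: pairs at distance `≤ ε`
are mapped to distance `≤ η` for some `η < ε`. Together with asymptotic regularity this makes
every orbit Cauchy; its limit is the fixed point, and it is unique because `ψ t ≤ β ψ t` forces
`t = 0`.
-/

open Filter Topology Set

structure IsAlteringDistance (ψ : ℝ → ℝ) : Prop where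
  continuousOn : ContinuousOn ψ (Ici 0)
  monotoneOn : MonotoneOn ψ (Ici 0)
  nonneg : ∀ t, 0 ≤ t → 0 ≤ ψ t
  eq_zero_iff : ∀ t, 0 ≤ t → (ψ t = 0 ↔ t = 0)

namespace IsAlteringDistance

variable {ψ : ℝ → ℝ} (hψ : IsAlteringDistance ψ)
include hψ

theorem pos {t : ℝ} (ht : 0 < t) : 0 < ψ t :=
  (hψ.nonneg t ht.le).lt_of_ne fun h => ht.ne' ((hψ.eq_zero_iff t ht.le).1 h.symm)

theorem eq_zero_of_le_mul_self {β t : ℝ} (hβ : β < 1) (ht : 0 ≤ t) (h : ψ t ≤ β * ψ t) :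
    t = 0 := by
  have := hψ.nonneg t ht
  exact (hψ.eq_zero_iff t ht).1 (by nlinarith)

theorem tendsto_zero_of_tendsto_zero {s : ℕ → ℝ} (hs : ∀ n, 0 ≤ s n)
    (hψs : Tendsto (fun n => ψ (s n)) atTop (𝓝 0)) : Tendsto s atTop (𝓝 0) := by
  rw [Metric.tendsto_atTop]
  intro ε hε
  obtain ⟨N, hN⟩ := Metric.tendsto_atTop.1 hψs (ψ ε) (hψ.pos hε)
  refine ⟨N, fun n hn => ?_⟩
  rw [Real.dist_eq, sub_zero, abs_of_nonneg (hs n)]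
  by_contra! hεs
  have hlt := hN n hn
  rw [Real.dist_eq, sub_zero, abs_of_nonneg (hψ.nonneg _ (hs n))] at hlt
  exact hlt.not_ge (hψ.monotoneOn hε.le (hs n) hεs)

/-- Since `β ψ ε < ψ ε`, continuity of `ψ` keeps `ψ s > β ψ ε` on a left neighbourhood
`(ε - δ, ε]`; take `η = ε - δ`. -/
theorem exists_lt_forall_le_of_le_mul {β : ℝ} (hβ : β < 1) {ε : ℝ} (hε : 0 < ε) :
    ∃ η < ε, ∀ s, 0 ≤ s → s ≤ ε → ψ s ≤ β * ψ ε → s ≤ η := by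
  have hlt : β * ψ ε < ψ ε := mul_lt_of_lt_one_left (hψ.pos hε) hβ
  obtain ⟨δ, hδ, hnear⟩ := Metric.eventually_nhds_iff.1 <| eventually_nhdsWithin_iff.1 <|
    (hψ.continuousOn ε hε.le).eventually (lt_mem_nhds hlt)
  refine ⟨ε - δ, by linarith, fun s hs hsε hψs => ?_⟩
  by_contra! hδs
  have hdist : dist s ε < δ := by
    rw [Real.dist_eq, abs_lt]
    constructor <;> linarith
  exact (hnear hdist (mem_Ici.2 hs)).not_ge hψs

end IsAlteringDistance

section MeirKeeler

variable {X : Type*} [MetricSpace X] {T : X → X}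

theorem dist_iterate_le_of_dist_self_map_le {ε η : ℝ} (hε : 0 ≤ ε)
    (hT : ∀ x y, dist x y ≤ ε → dist (T x) (T y) ≤ η) {z : X} (hz : dist z (T z) ≤ ε - η) :
    ∀ p : ℕ, dist z (T^[p] z) ≤ ε
  | 0 => by simpa using hε
  | p + 1 =>
    calc dist z (T^[p + 1] z)
        ≤ dist z (T z) + dist (T z) (T (T^[p] z)) := by
          rw [Function.iterate_succ_apply']; exact dist_triangle _ _ _
      _ ≤ (ε - η) + η := add_le_add hz (hT _ _ (dist_iterate_le_of_dist_self_map_le hε hT hz p))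
      _ = ε := by ring

theorem cauchySeq_iterate_of_forall_exists_lt
    (hT : ∀ ε > 0, ∃ η < ε, ∀ x y, dist x y ≤ ε → dist (T x) (T y) ≤ η) {x : X}
    (hx : Tendsto (fun n => dist (T^[n] x) (T^[n + 1] x)) atTop (𝓝 0)) :
    CauchySeq fun n => T^[n] x := by
  rw [Metric.cauchySeq_iff']
  intro ε hε
  obtain ⟨η, hηε, hη⟩ := hT (ε / 2) (half_pos hε)
  obtain ⟨N, hN⟩ := (hx.eventually (gt_mem_nhds (sub_pos.2 hηε))).exists_forall_of_atTop
  refine ⟨N, fun n hn => ?_⟩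
  obtain ⟨p, rfl⟩ := Nat.exists_eq_add_of_le hn
  have hstep : dist (T^[N] x) (T (T^[N] x)) ≤ ε / 2 - η := by
    rw [← Function.iterate_succ_apply' T N x]; exact (hN N le_rfl).le
  calc dist (T^[N + p] x) (T^[N] x)
      = dist (T^[N] x) (T^[p] (T^[N] x)) := by
        rw [dist_comm, add_comm, Function.iterate_add_apply]
    _ ≤ ε / 2 := dist_iterate_le_of_dist_self_map_le (half_pos hε).le hη hstep p
    _ < ε := half_lt_self hε

end MeirKeeler

section AlteringContraction

variable {X : Type*} [MetricSpace X] {ψ : ℝ → ℝ} {β : ℝ} {T : X → X}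

theorem altering_dist_iterate_le (hT : ∀ x y, ψ (dist (T x) (T y)) ≤ β * ψ (dist x y))
    (hβ₀ : 0 ≤ β) (x y : X) :
    ∀ n : ℕ, ψ (dist (T^[n] x) (T^[n] y)) ≤ β ^ n * ψ (dist x y)
  | 0 => by simp
  | n + 1 => by
    rw [Function.iterate_succ_apply', Function.iterate_succ_apply', pow_succ', mul_assoc]
    exact (hT _ _).trans
      (mul_le_mul_of_nonneg_left (altering_dist_iterate_le hT hβ₀ x y n) hβ₀)

variable (hψ : IsAlteringDistance ψ) (hT : ∀ x y, ψ (dist (T x) (T y)) ≤ β * ψ (dist x y))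
include hψ hT

theorem dist_map_le_of_altering (hβ : β < 1) (x y : X) : dist (T x) (T y) ≤ dist x y := by
  by_contra! h
  have hle : ψ (dist x y) ≤ β * ψ (dist x y) :=
    (hψ.monotoneOn dist_nonneg dist_nonneg h.le).trans (hT x y)
  obtain rfl := dist_eq_zero.1 (hψ.eq_zero_of_le_mul_self hβ dist_nonneg hle)
  simp at h

theorem forall_exists_lt_of_altering (hβ₀ : 0 ≤ β) (hβ : β < 1) :
    ∀ ε > 0, ∃ η < ε, ∀ x y : X, dist x y ≤ ε → dist (T x) (T y) ≤ η := by
  intro ε hε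
  obtain ⟨η, hηε, hη⟩ := hψ.exists_lt_forall_le_of_le_mul hβ hε
  refine ⟨η, hηε, fun x y hxy => hη _ dist_nonneg
    ((dist_map_le_of_altering hψ hT hβ x y).trans hxy) ?_⟩
  exact (hT x y).trans (mul_le_mul_of_nonneg_left
    (hψ.monotoneOn dist_nonneg hε.le hxy) hβ₀)

theorem tendsto_dist_iterate_of_altering (hβ₀ : 0 ≤ β) (hβ : β < 1) (x y : X) :
    Tendsto (fun n => dist (T^[n] x) (T^[n] y)) atTop (𝓝 0) := by
  refine hψ.tendsto_zero_of_tendsto_zero (fun _ => dist_nonneg) ?_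
  have hpow : Tendsto (fun n => β ^ n * ψ (dist x y)) atTop (𝓝 0) := by
    simpa using (tendsto_pow_atTop_nhds_zero_of_lt_one hβ₀ hβ).mul_const (ψ (dist x y))
  exact squeeze_zero (fun _ => hψ.nonneg _ dist_nonneg)
    (altering_dist_iterate_le hT hβ₀ x y) hpow

end AlteringContraction

theorem stmt_5 {X : Type*} [MetricSpace X] [CompleteSpace X] [Nonempty X]
    (β : ℝ) (hβ : β ∈ Set.Ioo (0:ℝ) 1) (ψ : ℝ → ℝ)
    (hψc : ContinuousOn ψ (Set.Ici 0)) (hψm : MonotoneOn ψ (Set.Ici 0))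
    (hψnn : ∀ t, 0 ≤ t → 0 ≤ ψ t) (hψ0 : ∀ t, 0 ≤ t → (ψ t = 0 ↔ t = 0))
    (T : X → X)
    (hT : ∀ x y : X, ψ (dist (T x) (T y)) ≤ β * ψ (dist x y)) :
    ∃ a : X, T a = a ∧ (∀ b : X, T b = b → b = a) ∧
      ∀ x : X, Tendsto (fun n => T^[n] x) atTop (nhds a) := by
  have hψ : IsAlteringDistance ψ := ⟨hψc, hψm, hψnn, hψ0⟩
  obtain ⟨hβ₀, hβ₁⟩ := hβ
  have hasymp := tendsto_dist_iterate_of_altering hψ hT hβ₀.le hβ₁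
  obtain ⟨x₀⟩ := ‹Nonempty X›
  have hcauchy : CauchySeq fun n => T^[n] x₀ := by
    refine cauchySeq_iterate_of_forall_exists_lt
      (forall_exists_lt_of_altering hψ hT hβ₀.le hβ₁) ?_
    simpa only [Function.iterate_succ_apply] using hasymp x₀ (T x₀)
  obtain ⟨a, ha⟩ := cauchySeq_tendsto_of_complete hcauchy
  have hTlip : LipschitzWith 1 T :=
    .of_dist_le_mul fun x y => by simpa using dist_map_le_of_altering hψ hT hβ₁ x y
  have hfix : T a = a := isFixedPt_of_tendsto_iterate ha hTlip.continuous.continuousAt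
  refine ⟨a, hfix, fun b hb => ?_, fun x => ?_⟩
  · refine dist_eq_zero.1 (hψ.eq_zero_of_le_mul_self hβ₁ dist_nonneg ?_)
    simpa only [hb, hfix] using hT b a
  · refine tendsto_iff_dist_tendsto_zero.2 ?_
    simpa only [Function.iterate_fixed hfix] using hasymp x a
end

section
/- Let (X,d) be a complete metric space and T : X → X a mapping satisfying ψ(d(Tx,Ty)) ≤ ψ(d(x,y)) − h(d(x,y)) for all x, y ∈ X, where ψ, h : [0,∞) → [0,∞) are continuous, nondecreasing, and satisfy ψ(t) = 0 iff t = 0 and h(t) = 0 iff t = 0. Then T has a unique fixed point. -/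
/-!
Along an orbit `xₙ = Tⁿ x₀` the values `ψ(d(xₙ, xₙ₊₁))` decrease by at least `h(d(xₙ, xₙ₊₁))`
at each step, so these decrements are summable and the consecutive distances tend to `0`.
Continuity of `ψ` at `ε > 0` yields `η > 0` such that `T` maps pairs at distance in `[ε, ε + η)`
to pairs at distance `< ε - 2η`; with consecutive distances below `η` this keeps the whole tail
of the orbit within `ε` of its first point, so the orbit is Cauchy. The contractive condition
makes `T` nonexpansive, hence continuous, so the limit is a fixed point; two fixed points `a, b`
would give `h(d(a, b)) ≤ 0`, i.e. `a = b`.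
-/

open Filter Topology Set Function

theorem tendsto_atTop_zero_of_succ_le_sub {a b : ℕ → ℝ} (ha : ∀ n, 0 ≤ a n)
    (hb : ∀ n, 0 ≤ b n) (hab : ∀ n, a (n + 1) ≤ a n - b n) : Tendsto b atTop (𝓝 0) := by
  have hsum : ∀ n, ∑ i ∈ Finset.range n, b i ≤ a 0 - a n := by
    intro n
    induction n with
    | zero => simp
    | succ n ih =>
      rw [Finset.sum_range_succ]
      linarith [hab n]
  refine (summable_of_sum_range_le (c := a 0) hb fun n => ?_).tendsto_atTop_zero
  linarith [hsum n, ha n]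

theorem tendsto_zero_of_monotoneOn_comp_tendsto_zero {α : Type*} {l : Filter α} {h : ℝ → ℝ}
    (hm : MonotoneOn h (Ici 0)) (hpos : ∀ t, 0 < t → 0 < h t) {u : α → ℝ}
    (hu : ∀ n, 0 ≤ u n) (hhu : Tendsto (h ∘ u) l (𝓝 0)) : Tendsto u l (𝓝 0) := by
  refine tendsto_order.2 ⟨fun a ha => Eventually.of_forall fun n => ha.trans_le (hu n),
    fun ε hε => ?_⟩
  filter_upwards [hhu.eventually (gt_mem_nhds (hpos ε hε))] with n hn
  by_contra! hεn
  exact (hm hε.le (hu n) hεn).not_gt hn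

theorem cauchySeq_of_dist_succ_tendsto_zero {X : Type*} [PseudoMetricSpace X] {x : ℕ → X}
    (hD : Tendsto (fun n => dist (x n) (x (n + 1))) atTop (𝓝 0))
    (hgap : ∀ ε > 0, ∃ η > 0, ∀ i j, ε ≤ dist (x i) (x j) → dist (x i) (x j) < ε + η →
      dist (x (i + 1)) (x (j + 1)) < ε - 2 * η) :
    CauchySeq x := by
  refine Metric.cauchySeq_iff'.2 fun ε hε => ?_
  obtain ⟨η, hη, hshift⟩ := hgap ε hε
  obtain ⟨N, hN⟩ := eventually_atTop.1 (hD.eventually (gt_mem_nhds hη))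
  refine ⟨N, Nat.le_induction (by simpa using hε) fun m hm ih => ?_⟩
  rw [dist_comm] at ih ⊢
  by_contra! hge
  have hlt : dist (x N) (x (m + 1)) < ε + η := by
    linarith [dist_triangle (x N) (x m) (x (m + 1)), hN m hm]
  have hshifted := hshift N (m + 1) hge hlt
  have hquad := dist_triangle4 (x N) (x (N + 1)) (x (m + 1 + 1)) (x (m + 1))
  rw [dist_comm (x (m + 1 + 1))] at hquad
  linarith [hN N le_rfl, hN (m + 1) (by omega)]

section Contractive

variable {ψ h : ℝ → ℝ}

theorem exists_uniform_gap (hψc : ContinuousOn ψ (Ici 0)) (hψm : MonotoneOn ψ (Ici 0))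
    (hhm : MonotoneOn h (Ici 0)) (hpos : ∀ t, 0 < t → 0 < h t) {ε : ℝ} (hε : 0 < ε) :
    ∃ η > 0, ∀ s t, 0 ≤ s → ε ≤ t → t < ε + η → ψ s ≤ ψ t - h t → s < ε - 2 * η := by
  have hψε : ContinuousAt ψ ε := hψc.continuousAt (Ici_mem_nhds hε)
  have hjump : Tendsto (fun η => ψ (ε + η) - ψ (ε - 2 * η)) (𝓝 0) (𝓝 0) := by
    have hcont : ContinuousAt (fun η => ψ (ε + η) - ψ (ε - 2 * η)) 0 :=
      (hψε.comp_of_eq (by fun_prop) (by simp)).sub (hψε.comp_of_eq (by fun_prop) (by simp))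
    simpa using hcont.tendsto
  have hsmall : ∀ᶠ η in 𝓝[>] (0 : ℝ),
      η ∈ Ioi 0 ∧ ψ (ε + η) - ψ (ε - 2 * η) < h ε ∧ η < ε / 2 :=
    eventually_mem_nhdsWithin.and (nhdsWithin_le_nhds
      ((hjump.eventually (gt_mem_nhds (hpos ε hε))).and (gt_mem_nhds (half_pos hε))))
  obtain ⟨η, (hη : 0 < η), hjumpη, hηε⟩ := hsmall.exists
  refine ⟨η, hη, fun s t hs hεt hte hst => ?_⟩
  by_contra! hsge
  have ht : ψ t ≤ ψ (ε + η) := hψm (hε.le.trans hεt) (mem_Ici.2 (by linarith)) hte.le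
  have hht : h ε ≤ h t := hhm hε.le (hε.le.trans hεt) hεt
  have hψs : ψ (ε - 2 * η) ≤ ψ s := hψm (mem_Ici.2 (by linarith)) hs hsge
  linarith

variable {X : Type*} [MetricSpace X] {T : X → X}

theorem eq_of_psi_dist_le_psi_dist_map
    (hT : ∀ x y : X, ψ (dist (T x) (T y)) ≤ ψ (dist x y) - h (dist x y))
    (hpos : ∀ t, 0 < t → 0 < h t) {x y : X} (hxy : ψ (dist x y) ≤ ψ (dist (T x) (T y))) :
    x = y := by
  by_contra hne
  linarith [hT x y, hpos _ (dist_pos.2 hne)]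

theorem lipschitzWith_one_of_psi_contractive
    (hT : ∀ x y : X, ψ (dist (T x) (T y)) ≤ ψ (dist x y) - h (dist x y))
    (hpos : ∀ t, 0 < t → 0 < h t) (hψm : MonotoneOn ψ (Ici 0)) : LipschitzWith 1 T :=
  LipschitzWith.of_dist_le_mul fun x y => by
    by_contra! hlt
    rw [NNReal.coe_one, one_mul] at hlt
    have hxy := eq_of_psi_dist_le_psi_dist_map hT hpos (hψm dist_nonneg dist_nonneg hlt.le)
    simp [hxy] at hlt

end Contractive

theorem stmt_6_general {X : Type*} [MetricSpace X] [CompleteSpace X] [Nonempty X]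
    (ψ h : ℝ → ℝ)
    (hψc : ContinuousOn ψ (Set.Ici 0)) (hψm : MonotoneOn ψ (Set.Ici 0))
    (hψnn : ∀ t, 0 ≤ t → 0 ≤ ψ t)
    (hhm : MonotoneOn h (Set.Ici 0))
    (hhnn : ∀ t, 0 ≤ t → 0 ≤ h t) (hh0 : ∀ t, 0 ≤ t → (h t = 0 ↔ t = 0))
    (T : X → X)
    (hT : ∀ x y : X, ψ (dist (T x) (T y)) ≤ ψ (dist x y) - h (dist x y)) :
    ∃! a : X, T a = a := by
  have hpos : ∀ t, 0 < t → 0 < h t := fun t ht =>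
    (hhnn t ht.le).lt_of_ne' fun h0 => ht.ne' ((hh0 t ht.le).1 h0)
  set x : ℕ → X := fun n => T^[n] (Classical.arbitrary X)
  have hstep : ∀ i j,
      ψ (dist (x (i + 1)) (x (j + 1))) ≤ ψ (dist (x i) (x j)) - h (dist (x i) (x j)) :=
    fun i j => by simpa only [x, iterate_succ_apply'] using hT (x i) (x j)
  have hD : Tendsto (fun n => dist (x n) (x (n + 1))) atTop (𝓝 0) :=
    tendsto_zero_of_monotoneOn_comp_tendsto_zero hhm hpos (fun _ => dist_nonneg)
      (tendsto_atTop_zero_of_succ_le_sub (a := fun n => ψ (dist (x n) (x (n + 1))))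
        (fun _ => hψnn _ dist_nonneg) (fun _ => hhnn _ dist_nonneg) fun n => hstep n (n + 1))
  have hcauchy : CauchySeq x := cauchySeq_of_dist_succ_tendsto_zero hD fun ε hε => by
    obtain ⟨η, hη, hgap⟩ := exists_uniform_gap hψc hψm hhm hpos hε
    exact ⟨η, hη, fun i j hεd hdη => hgap _ _ dist_nonneg hεd hdη (hstep i j)⟩
  obtain ⟨a, ha⟩ := cauchySeq_tendsto_of_complete hcauchy
  have hfix : T a = a := isFixedPt_of_tendsto_iterate ha
    (lipschitzWith_one_of_psi_contractive hT hpos hψm).continuous.continuousAt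
  refine ⟨a, hfix, fun b hb => eq_of_psi_dist_le_psi_dist_map hT hpos ?_⟩
  rw [hb, hfix]

theorem stmt_6 {X : Type*} [MetricSpace X] [CompleteSpace X] [Nonempty X]
    (ψ h : ℝ → ℝ)
    (hψc : ContinuousOn ψ (Set.Ici 0)) (hψm : MonotoneOn ψ (Set.Ici 0))
    (hψnn : ∀ t, 0 ≤ t → 0 ≤ ψ t) (hψ0 : ∀ t, 0 ≤ t → (ψ t = 0 ↔ t = 0))
    (hhc : ContinuousOn h (Set.Ici 0)) (hhm : MonotoneOn h (Set.Ici 0))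
    (hhnn : ∀ t, 0 ≤ t → 0 ≤ h t) (hh0 : ∀ t, 0 ≤ t → (h t = 0 ↔ t = 0))
    (T : X → X)
    (hT : ∀ x y : X, ψ (dist (T x) (T y)) ≤ ψ (dist x y) - h (dist x y)) :
    ∃! a : X, T a = a :=
  stmt_6_general ψ h hψc hψm hψnn hhm hhnn hh0 T hT
end

section
/- Let (X,d) be a complete metric space and T : X → X satisfy ψ(d(Tx,Ty)) ≤ ψ(M(x,y)) − h(M(x,y)) for all x, y ∈ X, where M(x,y) = max{d(x,y), d(x,Tx), d(y,Ty), (d(x,Ty)+d(y,Tx))/2}, ψ is an altering distance function, and h : [0,∞) → [0,∞) is lower semicontinuous with h(t) = 0 iff t = 0. Then T has a unique fixed point. -/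
/-!
Along the orbit `xₙ = Tⁿ x₀` the contractive condition applied to `(xₙ, xₙ₊₁)` forces
`d(xₙ₊₁, xₙ₊₂) ≤ d(xₙ, xₙ₊₁)`, so these distances decrease to some `r`. Every later step
takes the same shape: two sequences `uₖ, vₖ → c` with `ψ uₖ ≤ ψ vₖ - h vₖ`; continuity of `ψ`
and lower semicontinuity of `h` give `h c ≤ 0` in the limit, hence `c = 0`. This yields
`r = 0`; if the orbit were not Cauchy, the usual pair of subsequences with
`d(xₖ, x_{q k}) → ε > 0` would force `ε = 0`; and the limit `a` of the orbit satisfies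
`d(a, Ta) = 0`.
-/

open Filter Topology Set

theorem eq_zero_of_tendsto_of_le_sub {ι : Type*} {l : Filter ι} [l.NeBot] {ψ h : ℝ → ℝ}
    (hψ : ContinuousOn ψ (Ici 0)) (hh : LowerSemicontinuousOn h (Ici 0))
    (hpos : ∀ t, 0 < t → 0 < h t) {u v : ι → ℝ} {c : ℝ} (hu0 : ∀ i, 0 ≤ u i)
    (hv0 : ∀ i, 0 ≤ v i) (hu : Tendsto u l (𝓝 c)) (hv : Tendsto v l (𝓝 c))
    (huv : ∀ᶠ i in l, ψ (u i) ≤ ψ (v i) - h (v i)) : c = 0 := by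
  have hc : 0 ≤ c := ge_of_tendsto' hu hu0
  have hu' : Tendsto u l (𝓝[Ici 0] c) := tendsto_nhdsWithin_iff.2 ⟨hu, .of_forall hu0⟩
  have hv' : Tendsto v l (𝓝[Ici 0] c) := tendsto_nhdsWithin_iff.2 ⟨hv, .of_forall hv0⟩
  have hgap : Tendsto (fun i => ψ (v i) - ψ (u i)) l (𝓝 0) := by
    simpa using ((hψ c hc).tendsto.comp hv').sub ((hψ c hc).tendsto.comp hu')
  have hhc : h c ≤ 0 := le_of_forall_lt_imp_le_of_dense fun b hb => ge_of_tendsto hgap <| by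
    filter_upwards [hv'.eventually (hh c hc b hb), huv] with i hbi hi
    linarith
  by_contra hc0
  linarith [hpos c (lt_of_le_of_ne hc (Ne.symm hc0))]

section Sequences

variable {X : Type*} [PseudoMetricSpace X] {x : ℕ → X}

theorem tendsto_dist_succ_left (hx : Tendsto (fun n => dist (x n) (x (n + 1))) atTop (𝓝 0))
    {p : ℕ → ℕ} (hp : Tendsto p atTop atTop) {y : ℕ → X} {ε : ℝ}
    (h : Tendsto (fun k => dist (x (p k)) (y k)) atTop (𝓝 ε)) :
    Tendsto (fun k => dist (x (p k + 1)) (y k)) atTop (𝓝 ε) := by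
  have hshift : Tendsto (fun k => dist (x (p k + 1)) (y k) - dist (x (p k)) (y k)) atTop (𝓝 0) :=
    squeeze_zero_norm (fun k => by
      simpa [dist_comm] using abs_dist_sub_le (x (p k + 1)) (x (p k)) (y k)) (hx.comp hp)
  simpa using hshift.add h

theorem exists_tendsto_dist_of_not_cauchySeq
    (hx : Tendsto (fun n => dist (x n) (x (n + 1))) atTop (𝓝 0)) (hc : ¬CauchySeq x) :
    ∃ ε > 0, ∃ q : ℕ → ℕ, (∀ k, k < q k) ∧
      Tendsto (fun k => dist (x k) (x (q k))) atTop (𝓝 ε) := by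
  obtain ⟨ε, hε, hfar⟩ : ∃ ε > 0, ∀ N, ∃ n ≥ N, ε ≤ dist (x n) (x N) := by
    simpa [Metric.cauchySeq_iff'] using hc
  have hex : ∀ k, ∃ n, k ≤ n ∧ ε ≤ dist (x k) (x n) := fun k => by
    obtain ⟨n, hn, hd⟩ := hfar k
    exact ⟨n, hn, by rwa [dist_comm]⟩
  classical
  -- `q k` is the first index after `k` at which the sequence leaves the `ε`-ball around `x k`.
  let q k := Nat.find (hex k)
  have hq k : k ≤ q k ∧ ε ≤ dist (x k) (x (q k)) := Nat.find_spec (hex k)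
  have hq_lt k : k < q k := by
    refine lt_of_le_of_ne (hq k).1 fun hk => ?_
    have := (hq k).2
    rw [← hk, dist_self] at this
    linarith
  have hupper k : dist (x k) (x (q k)) ≤ ε + dist (x (q k - 1)) (x (q k - 1 + 1)) := by
    have hprev : dist (x k) (x (q k - 1)) < ε := by
      have := Nat.find_min (hex k) (m := q k - 1) (by show q k - 1 < q k; have := hq_lt k; omega)
      push Not at this
      exact this (by have := hq_lt k; omega)
    have hsucc : q k - 1 + 1 = q k := by have := hq_lt k; omega
    have := dist_triangle (x k) (x (q k - 1)) (x (q k))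
    rw [hsucc]
    linarith
  have hq_pred : Tendsto (fun k => q k - 1) atTop atTop :=
    tendsto_atTop_mono (fun k => Nat.le_sub_one_of_lt (hq_lt k)) tendsto_id
  refine ⟨ε, hε, q, hq_lt, tendsto_of_tendsto_of_tendsto_of_le_of_le tendsto_const_nhds ?_
    (fun k => (hq k).2) hupper⟩
  simpa using (hx.comp hq_pred).const_add ε

end Sequences

section Ciric

variable {X : Type*}

noncomputable def ciricMax [PseudoMetricSpace X] (T : X → X) (x y : X) : ℝ :=
  max (max (dist x y) (dist x (T x))) (max (dist y (T y)) ((dist x (T y) + dist y (T x)) / 2))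

def IsCiricContraction [PseudoMetricSpace X] (ψ h : ℝ → ℝ) (T : X → X) : Prop :=
  ∀ x y, ψ (dist (T x) (T y)) ≤ ψ (ciricMax T x y) - h (ciricMax T x y)

section Pseudo

variable [PseudoMetricSpace X] {T : X → X}

theorem ciricMax_nonneg (x y : X) : 0 ≤ ciricMax T x y :=
  dist_nonneg.trans ((le_max_left _ _).trans (le_max_left _ _))

theorem ciricMax_apply_right (x : X) :
    ciricMax T x (T x) = max (dist x (T x)) (dist (T x) (T (T x))) := by
  have htri := dist_triangle x (T x) (T (T x))
  have hmid : (dist x (T (T x)) + dist (T x) (T x)) / 2 ≤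
      max (dist x (T x)) (dist (T x) (T (T x))) := by
    rw [dist_self]
    rcases le_total (dist x (T x)) (dist (T x) (T (T x))) with hle | hle
    · rw [max_eq_right hle]; linarith
    · rw [max_eq_left hle]; linarith
  rw [ciricMax, max_self, ← max_assoc, max_eq_left hmid]

theorem ciricMax_of_isFixedPt {a b : X} (ha : Function.IsFixedPt T a)
    (hb : Function.IsFixedPt T b) : ciricMax T a b = dist a b := by
  rw [ciricMax, ha, hb, dist_comm b a, dist_self, dist_self, add_self_div_two,
    max_eq_left dist_nonneg, max_eq_right dist_nonneg, max_self]

theorem tendsto_ciricMax {ι : Type*} {l : Filter ι} {x y : ι → X} {α β γ δ η : ℝ}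
    (hxy : Tendsto (fun i => dist (x i) (y i)) l (𝓝 α))
    (hx : Tendsto (fun i => dist (x i) (T (x i))) l (𝓝 β))
    (hy : Tendsto (fun i => dist (y i) (T (y i))) l (𝓝 γ))
    (hxTy : Tendsto (fun i => dist (x i) (T (y i))) l (𝓝 δ))
    (hyTx : Tendsto (fun i => dist (y i) (T (x i))) l (𝓝 η)) :
    Tendsto (fun i => ciricMax T (x i) (y i)) l (𝓝 (max (max α β) (max γ ((δ + η) / 2)))) :=
  (hxy.max hx).max (hy.max ((hxTy.add hyTx).div_const 2))

variable {ψ h : ℝ → ℝ}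

theorem IsCiricContraction.dist_apply_apply_le (hT : IsCiricContraction ψ h T)
    (hpos : ∀ t, 0 < t → 0 < h t) (x : X) : dist (T x) (T (T x)) ≤ dist x (T x) := by
  by_contra! hlt
  have H := hT x (T x)
  rw [ciricMax_apply_right, max_eq_right hlt.le] at H
  linarith [hpos _ (dist_nonneg.trans_lt hlt)]

theorem IsCiricContraction.le_sub_dist_apply (hT : IsCiricContraction ψ h T)
    (hpos : ∀ t, 0 < t → 0 < h t) (x : X) :
    ψ (dist (T x) (T (T x))) ≤ ψ (dist x (T x)) - h (dist x (T x)) := by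
  simpa [ciricMax_apply_right, max_eq_left (hT.dist_apply_apply_le hpos x)] using hT x (T x)

theorem IsCiricContraction.tendsto_dist_succ (hT : IsCiricContraction ψ h T)
    (hψ : ContinuousOn ψ (Ici 0)) (hh : LowerSemicontinuousOn h (Ici 0))
    (hpos : ∀ t, 0 < t → 0 < h t) {x : ℕ → X} (hx : ∀ n, x (n + 1) = T (x n)) :
    Tendsto (fun n => dist (x n) (x (n + 1))) atTop (𝓝 0) := by
  have hanti : Antitone fun n => dist (x n) (x (n + 1)) := antitone_nat_of_succ_le fun n => by
    simpa only [hx] using hT.dist_apply_apply_le hpos (x n)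
  have hlim := tendsto_atTop_ciInf hanti ⟨0, by rintro _ ⟨n, rfl⟩; exact dist_nonneg⟩
  have hr : ⨅ n, dist (x n) (x (n + 1)) = 0 :=
    eq_zero_of_tendsto_of_le_sub hψ hh hpos (fun _ => dist_nonneg) (fun _ => dist_nonneg)
      (hlim.comp (tendsto_add_atTop_nat 1)) hlim
      (.of_forall fun n => by
        simpa only [Function.comp_apply, hx] using hT.le_sub_dist_apply hpos (x n))
  rwa [hr] at hlim

theorem IsCiricContraction.cauchySeq (hT : IsCiricContraction ψ h T)
    (hψ : ContinuousOn ψ (Ici 0)) (hh : LowerSemicontinuousOn h (Ici 0))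
    (hpos : ∀ t, 0 < t → 0 < h t) {x : ℕ → X} (hx : ∀ n, x (n + 1) = T (x n)) :
    CauchySeq x := by
  have hd := hT.tendsto_dist_succ hψ hh hpos hx
  by_contra hc
  obtain ⟨ε, hε, q, hq, hlim⟩ := exists_tendsto_dist_of_not_cauchySeq hd hc
  have hq_top : Tendsto q atTop atTop := tendsto_atTop_mono (fun k => (hq k).le) tendsto_id
  have hl : Tendsto (fun k => dist (x (k + 1)) (x (q k))) atTop (𝓝 ε) :=
    tendsto_dist_succ_left hd tendsto_id hlim
  have hr : Tendsto (fun k => dist (x (q k + 1)) (x k)) atTop (𝓝 ε) :=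
    tendsto_dist_succ_left hd hq_top (by simpa only [dist_comm] using hlim)
  have hlr : Tendsto (fun k => dist (x (q k + 1)) (x (k + 1))) atTop (𝓝 ε) :=
    tendsto_dist_succ_left hd hq_top (by simpa only [dist_comm] using hl)
  have hM := tendsto_ciricMax (T := T) hlim (by simpa only [hx] using hd)
    (by simpa only [Function.comp_def, hx] using hd.comp hq_top)
    (by simpa only [hx, dist_comm] using hr) (by simpa only [hx, dist_comm] using hl)
  simp only [add_self_div_two, max_eq_left hε.le, max_eq_right hε.le, max_self] at hM
  refine hε.ne' (eq_zero_of_tendsto_of_le_sub hψ hh hpos (fun _ => dist_nonneg)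
    (fun _ => ciricMax_nonneg _ _) (by simpa only [dist_comm] using hlr) hM
    (.of_forall fun k => ?_))
  simpa only [hx] using hT (x k) (x (q k))

end Pseudo

variable [MetricSpace X] {T : X → X} {ψ h : ℝ → ℝ}

theorem IsCiricContraction.isFixedPt_of_tendsto (hT : IsCiricContraction ψ h T)
    (hψ : ContinuousOn ψ (Ici 0)) (hh : LowerSemicontinuousOn h (Ici 0))
    (hpos : ∀ t, 0 < t → 0 < h t) {ι : Type*} {l : Filter ι} [l.NeBot] {x : ι → X} {a : X}
    (hx : Tendsto x l (𝓝 a)) (hTx : Tendsto (fun i => T (x i)) l (𝓝 a)) :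
    Function.IsFixedPt T a := by
  have hM := tendsto_ciricMax (y := fun _ => a) (hx.dist tendsto_const_nhds) (hx.dist hTx)
    tendsto_const_nhds (hx.dist tendsto_const_nhds) (tendsto_const_nhds.dist hTx)
  simp only [dist_self, max_self, add_zero, max_eq_left (half_le_self dist_nonneg),
    max_eq_right dist_nonneg] at hM
  have hρ := eq_zero_of_tendsto_of_le_sub hψ hh hpos (fun _ => dist_nonneg)
    (fun _ => ciricMax_nonneg _ _) (hTx.dist tendsto_const_nhds) hM (.of_forall fun i => hT (x i) a)
  exact (dist_eq_zero.1 hρ).symm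

theorem IsCiricContraction.eq_of_isFixedPt (hT : IsCiricContraction ψ h T)
    (hpos : ∀ t, 0 < t → 0 < h t) {a b : X} (ha : Function.IsFixedPt T a)
    (hb : Function.IsFixedPt T b) : a = b := by
  have H := hT a b
  rw [ciricMax_of_isFixedPt ha hb, ha, hb] at H
  by_contra hab
  linarith [hpos _ (dist_pos.2 hab)]

end Ciric

theorem stmt_7_general {X : Type*} [MetricSpace X] [CompleteSpace X] [Nonempty X]
    (ψ h : ℝ → ℝ)
    (hψc : ContinuousOn ψ (Set.Ici 0))
    (hhl : LowerSemicontinuousOn h (Set.Ici 0))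
    (hhnn : ∀ t, 0 ≤ t → 0 ≤ h t) (hh0 : ∀ t, 0 ≤ t → (h t = 0 ↔ t = 0))
    (T : X → X)
    (hT : ∀ x y : X,
      ψ (dist (T x) (T y)) ≤
        ψ (max (max (dist x y) (dist x (T x)))
            (max (dist y (T y)) ((dist x (T y) + dist y (T x)) / 2))) -
        h (max (max (dist x y) (dist x (T x)))
            (max (dist y (T y)) ((dist x (T y) + dist y (T x)) / 2)))) :
    ∃! a : X, T a = a := by
  have hpos : ∀ t, 0 < t → 0 < h t := fun t ht =>
    (hhnn t ht.le).lt_of_ne fun h0 => ht.ne' ((hh0 t ht.le).1 h0.symm)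
  have hT' : IsCiricContraction ψ h T := hT
  obtain ⟨x₀⟩ := ‹Nonempty X›
  have horbit n : T^[n + 1] x₀ = T (T^[n] x₀) := Function.iterate_succ_apply' T n x₀
  obtain ⟨a, ha⟩ :=
    cauchySeq_tendsto_of_complete (hT'.cauchySeq hψc hhl hpos (x := (T^[·] x₀)) horbit)
  have hTa : Function.IsFixedPt T a := hT'.isFixedPt_of_tendsto hψc hhl hpos ha <| by
    simpa only [← horbit] using (tendsto_add_atTop_iff_nat 1).2 ha
  exact ⟨a, hTa, fun b hb => hT'.eq_of_isFixedPt hpos hb hTa⟩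

theorem stmt_7 {X : Type*} [MetricSpace X] [CompleteSpace X] [Nonempty X]
    (ψ h : ℝ → ℝ)
    (hψc : ContinuousOn ψ (Set.Ici 0)) (hψm : MonotoneOn ψ (Set.Ici 0))
    (hψnn : ∀ t, 0 ≤ t → 0 ≤ ψ t) (hψ0 : ∀ t, 0 ≤ t → (ψ t = 0 ↔ t = 0))
    (hhl : LowerSemicontinuousOn h (Set.Ici 0))
    (hhnn : ∀ t, 0 ≤ t → 0 ≤ h t) (hh0 : ∀ t, 0 ≤ t → (h t = 0 ↔ t = 0))
    (T : X → X)
    (hT : ∀ x y : X,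
      ψ (dist (T x) (T y)) ≤
        ψ (max (max (dist x y) (dist x (T x)))
            (max (dist y (T y)) ((dist x (T y) + dist y (T x)) / 2))) -
        h (max (max (dist x y) (dist x (T x)))
            (max (dist y (T y)) ((dist x (T y) + dist y (T x)) / 2)))) :
    ∃! a : X, T a = a :=
  stmt_7_general ψ h hψc hhl hhnn hh0 T hT
end

section
/- Let (X,d) be a metric space, T : X → X, α ∈ (0, 1/2], and let {x_n} be the orbit x_{n+1} = T x_n of a point x_0. Then for every n and every y ∈ X, at least one of α·d(x_n, T x_n) ≤ d(x_n, y) or α·d(x_{n+1}, T x_{n+1}) ≤ d(x_{n+1}, y) holds, provided d(x_{n+1}, x_{n+2}) ≤ d(x_n, x_{n+1}). -/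
theorem mul_dist_le_dist_or_mul_dist_le_dist {X : Type*} [PseudoMetricSpace X] {α : ℝ}
    (hα : α ≤ 1 / 2) {p q r : X} (hqr : dist q r ≤ dist p q) (y : X) :
    α * dist p q ≤ dist p y ∨ α * dist q r ≤ dist q y := by
  by_contra! ⟨hp, hq⟩
  have hα₀ : 0 < α := pos_of_mul_pos_left (dist_nonneg.trans_lt hp) dist_nonneg
  have : dist p q < dist p q :=
    calc dist p q ≤ dist p y + dist q y := dist_triangle_right p q y
      _ < α * dist p q + α * dist q r := add_lt_add hp hq
      _ ≤ 2 * α * dist p q := by linarith [mul_le_mul_of_nonneg_left hqr hα₀.le]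
      _ ≤ dist p q := mul_le_of_le_one_left dist_nonneg (by linarith)
  exact this.false

theorem stmt_14 {X : Type*} [MetricSpace X] (T : X → X)
    (α : ℝ) (hα : α ∈ Set.Ioc (0:ℝ) (1/2))
    (x : ℕ → X) (hx : ∀ n, x (n + 1) = T (x n))
    (n : ℕ) (hdec : dist (x (n + 1)) (x (n + 2)) ≤ dist (x n) (x (n + 1)))
    (y : X) :
    α * dist (x n) (T (x n)) ≤ dist (x n) y ∨
      α * dist (x (n + 1)) (T (x (n + 1))) ≤ dist (x (n + 1)) y := by
  rw [← hx n, ← hx (n + 1)]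
  exact mul_dist_le_dist_or_mul_dist_le_dist hα.2 hdec y
end

section
/- Let (X,d) be a complete metric space, T : X → X, α ∈ (0, 1/2], ψ an altering distance function, and φ : [0,∞)^k → [0,∞) with φ(0,...,0) = 0, upper semicontinuity along convergent sequences (lim sup φ(t^{(n)}) ≤ φ(t) when t^{(n)} → t), and φ(t_1,...,t_k) < ψ(max_i t_i) whenever (t_1,...,t_k) ≠ (0,...,0). Let g_1,...,g_k : [0,∞)^5 → [0,∞) be continuous, coordinatewise nondecreasing, subhomogeneous functions with g_i(1,1,1,0,2), g_i(1,1,1,1,1), g_i(1,1,1,2,0) ∈ (0,1]. Suppose that α·d(x,Tx) ≤ d(x,y) implies ψ(d(Tx,Ty)) ≤ φ(g_1(M_{xy}),...,g_k(M_{xy})) for all x, y ∈ X, where M_{xy} = (d(x,y), d(y,Ty), d(x,Tx), d(x,Ty), d(y,Tx)). Then T has a unique fixed point in X. -/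
/-!
Write `R b p` for `ψ b ≤ φ (g₁ p, …, g_k p)`. Subhomogeneity and monotonicity give
`gᵢ p ≤ c` whenever `p ≤ c • (1,1,1,1,1)` or `p ≤ c • (1,1,1,2,0)`, so `φ < ψ ∘ max` forces `c = 0`
in `R c p` for such `p`; upper semicontinuity of `φ` and continuity of `ψ` make `R` closed under
limits. Along the Picard orbit the pair `(xₙ, xₙ₊₁)` satisfies the Suzuki condition, so the
second dominance makes `d(xₙ, xₙ₊₁)` decrease, and (along a subsequence on which
`d(xₙ, xₙ₊₂)` converges) tend to `0`. If the orbit were not Cauchy, pairs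
`xₙ, xₘ₊₁` with `d → ε > 0` would give `R ε (ε,0,0,ε,ε)` in the limit. At the limit `z`, since
`α ≤ 1/2`, the condition `α d(xₙ, Txₙ) ≤ d(xₙ, z)` holds for `n` or `n + 1`, and passing to
the limit along those indices gives `R (d(z,Tz)) (0, d(z,Tz), 0, d(z,Tz), 0)`.
-/

open Filter Topology Set Function

structure IsAlteringDistance_s15 (ψ : ℝ → ℝ) : Prop where
  continuousOn : ContinuousOn ψ (Ici 0)
  monotoneOn : MonotoneOn ψ (Ici 0)
  eq_zero_iff : ∀ t, 0 ≤ t → (ψ t = 0 ↔ t = 0)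

theorem IsAlteringDistance_s15.pos {ψ : ℝ → ℝ} (hψ : IsAlteringDistance_s15 ψ) {t : ℝ} (ht : 0 < t) :
    0 < ψ t := by
  have h0 : ψ 0 = 0 := (hψ.eq_zero_iff 0 le_rfl).2 rfl
  have hle : ψ 0 ≤ ψ t := hψ.monotoneOn self_mem_Ici ht.le ht.le
  exact (h0 ▸ hle).lt_of_ne' fun h => ht.ne' ((hψ.eq_zero_iff t ht.le).1 h)

def IsSubhomogeneous {κ : Type*} (G : (κ → ℝ) → ℝ) : Prop :=
  ∀ a : ℝ, 0 ≤ a → ∀ p : κ → ℝ, 0 ≤ p → G (a • p) ≤ a * G p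

section Subhomogeneous

variable {κ : Type*} {G : (κ → ℝ) → ℝ}

theorem IsSubhomogeneous.nonneg (hG : IsSubhomogeneous G) (hmono : MonotoneOn G (Ici 0))
    {p : κ → ℝ} (hp : 0 ≤ p) : 0 ≤ G p := by
  have h0 : G 0 ≤ 2 * G 0 := by simpa using hG 2 zero_le_two 0 le_rfl
  linarith [hmono self_mem_Ici hp hp]

theorem IsSubhomogeneous.le_of_le_smul (hG : IsSubhomogeneous G) (hmono : MonotoneOn G (Ici 0))
    {v p : κ → ℝ} {c : ℝ} (hv : 0 ≤ v) (hGv : G v ≤ 1) (hc : 0 ≤ c) (hp : 0 ≤ p)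
    (hpv : p ≤ c • v) : G p ≤ c :=
  calc G p ≤ G (c • v) := hmono hp (smul_nonneg hc hv) hpv
    _ ≤ c * G v := hG c hc v hv
    _ ≤ c := mul_le_of_le_one_right hc hGv

end Subhomogeneous

structure IsControlRelation (R : ℝ → (Fin 5 → ℝ) → Prop) : Prop where
  eq_zero_of_le_smul_one : ∀ c p, 0 ≤ p → p ≤ c • 1 → R c p → c = 0
  eq_zero_of_le_smul_step : ∀ c p, 0 ≤ p → p ≤ c • ![1, 1, 1, 2, 0] → R c p → c = 0
  of_tendsto : ∀ (b : ℕ → ℝ) (p : ℕ → Fin 5 → ℝ) (L : ℝ) (q : Fin 5 → ℝ),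
    (∀ n, 0 ≤ b n) → (∀ n, 0 ≤ p n) → Tendsto b atTop (𝓝 L) → Tendsto p atTop (𝓝 q) →
    (∀ᶠ n in atTop, R (b n) (p n)) → R L q

section Comparison

variable {ι : Type*} [Fintype ι] [Nonempty ι] {ψ : ℝ → ℝ} {φ : (ι → ℝ) → ℝ}

theorem phi_lt_psi_of_forall_le (hψ : IsAlteringDistance_s15 ψ) (hφ0 : φ 0 = 0)
    (hφlt : ∀ s : ι → ℝ, 0 ≤ s → s ≠ 0 → φ s < ψ (Finset.univ.sup' Finset.univ_nonempty s))
    {s : ι → ℝ} {b : ℝ} (hb : 0 < b) (hs : 0 ≤ s) (hsb : ∀ i, s i ≤ b) : φ s < ψ b := by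
  rcases eq_or_ne s 0 with rfl | hne
  · exact hφ0 ▸ hψ.pos hb
  have hsup : 0 ≤ Finset.univ.sup' Finset.univ_nonempty s :=
    (hs (Classical.arbitrary ι)).trans (Finset.le_sup' s (Finset.mem_univ _))
  calc φ s < ψ (Finset.univ.sup' Finset.univ_nonempty s) := hφlt s hs hne
    _ ≤ ψ b := hψ.monotoneOn hsup hb.le (Finset.sup'_le _ _ fun i _ => hsb i)

theorem psi_le_phi_of_tendsto (hψ : IsAlteringDistance_s15 ψ) (hφ0 : φ 0 = 0)
    (hφusc : ∀ (t : ℕ → ι → ℝ) (l : ι → ℝ), Tendsto t atTop (𝓝 l) →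
      limsup (fun n => φ (t n)) atTop ≤ φ l)
    (hφlt : ∀ s : ι → ℝ, 0 ≤ s → s ≠ 0 → φ s < ψ (Finset.univ.sup' Finset.univ_nonempty s))
    {b : ℕ → ℝ} {t : ℕ → ι → ℝ} {L : ℝ} {l : ι → ℝ} (hb : ∀ n, 0 ≤ b n) (ht : ∀ n, 0 ≤ t n)
    (hbL : Tendsto b atTop (𝓝 L)) (htl : Tendsto t atTop (𝓝 l))
    (hle : ∀ᶠ n in atTop, ψ (b n) ≤ φ (t n)) : ψ L ≤ φ l := by
  have hψb : Tendsto (fun n => ψ (b n)) atTop (𝓝 (ψ L)) :=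
    (hψ.continuousOn.continuousWithinAt (ge_of_tendsto' hbL hb)).tendsto.comp
      (tendsto_nhdsWithin_iff.2 ⟨hbL, Eventually.of_forall hb⟩)
  have hbdd : ∀ᶠ n in atTop, φ (t n) ≤ ψ (‖l‖ + 1) := by
    filter_upwards [htl.norm.eventually (gt_mem_nhds (lt_add_one ‖l‖))] with n hn
    refine (phi_lt_psi_of_forall_le hψ hφ0 hφlt (by positivity) (ht n) fun i => ?_).le
    exact (Real.le_norm_self _).trans ((norm_le_pi_norm (t n) i).trans hn.le)
  calc ψ L = limsup (fun n => ψ (b n)) atTop := hψb.limsup_eq.symm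
    _ ≤ limsup (fun n => φ (t n)) atTop :=
      limsup_le_limsup hle hψb.isCoboundedUnder_le (isBoundedUnder_of_eventually_le hbdd)
    _ ≤ φ l := hφusc t l htl

theorem eq_zero_of_psi_le_phi_of_le_smul {κ : Type*} {G : ι → (κ → ℝ) → ℝ}
    (hψ : IsAlteringDistance_s15 ψ) (hφ0 : φ 0 = 0)
    (hφlt : ∀ s : ι → ℝ, 0 ≤ s → s ≠ 0 → φ s < ψ (Finset.univ.sup' Finset.univ_nonempty s))
    (hGm : ∀ i, MonotoneOn (G i) (Ici 0)) (hGs : ∀ i, IsSubhomogeneous (G i))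
    {v p : κ → ℝ} {c : ℝ} (hv : 0 ≤ v) (hGv : ∀ i, G i v ≤ 1) (hc : 0 ≤ c) (hp : 0 ≤ p)
    (hpv : p ≤ c • v) (hle : ψ c ≤ φ fun i => G i p) : c = 0 := by
  by_contra hne
  have hlt := phi_lt_psi_of_forall_le hψ hφ0 hφlt (lt_of_le_of_ne hc (Ne.symm hne))
    (fun i => (hGs i).nonneg (hGm i) hp) fun i => (hGs i).le_of_le_smul (hGm i) hv (hGv i) hc hp hpv
  linarith

theorem isControlRelation_of_isAlteringDistance (hψ : IsAlteringDistance_s15 ψ) (hφ0 : φ 0 = 0)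
    (hφusc : ∀ (t : ℕ → ι → ℝ) (l : ι → ℝ), Tendsto t atTop (𝓝 l) →
      limsup (fun n => φ (t n)) atTop ≤ φ l)
    (hφlt : ∀ s : ι → ℝ, 0 ≤ s → s ≠ 0 → φ s < ψ (Finset.univ.sup' Finset.univ_nonempty s))
    {G : ι → (Fin 5 → ℝ) → ℝ} (hGc : ∀ i, Continuous (G i))
    (hGm : ∀ i, MonotoneOn (G i) (Ici 0)) (hGs : ∀ i, IsSubhomogeneous (G i))
    (hG₁ : ∀ i, G i 1 ≤ 1) (hG₂ : ∀ i, G i ![1, 1, 1, 2, 0] ≤ 1) :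
    IsControlRelation fun b p => ψ b ≤ φ fun i => G i p where
  eq_zero_of_le_smul_one c p hp hpc :=
    eq_zero_of_psi_le_phi_of_le_smul hψ hφ0 hφlt hGm hGs zero_le_one hG₁
      (by simpa using (hp 0).trans (hpc 0)) hp hpc
  eq_zero_of_le_smul_step c p hp hpc :=
    eq_zero_of_psi_le_phi_of_le_smul hψ hφ0 hφlt hGm hGs
      (fun i => by fin_cases i <;> norm_num) hG₂ (by simpa using (hp 0).trans (hpc 0)) hp hpc
  of_tendsto b p L q hb hp hbL hpq hle :=
    psi_le_phi_of_tendsto hψ hφ0 hφusc hφlt hb (fun n i => (hGs i).nonneg (hGm i) (hp n))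
      hbL (tendsto_pi_nhds.2 fun i => ((hGc i).tendsto q).comp hpq) hle

end Comparison

theorem Filter.Tendsto.dist_congr {ι X : Type*} [PseudoMetricSpace X] {l : Filter ι}
    {u u' v v' : ι → X} {c : ℝ} (h : Tendsto (fun n => dist (u n) (v n)) l (𝓝 c))
    (hu : Tendsto (fun n => dist (u n) (u' n)) l (𝓝 0))
    (hv : Tendsto (fun n => dist (v n) (v' n)) l (𝓝 0)) :
    Tendsto (fun n => dist (u' n) (v' n)) l (𝓝 c) := by
  refine h.congr_dist (squeeze_zero (fun _ => dist_nonneg) (fun n => dist_dist_dist_le _ _ _ _) ?_)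
  simpa using hu.add hv

section SuzukiContraction

variable {X : Type*} [MetricSpace X] {T : X → X} {α : ℝ} {R : ℝ → (Fin 5 → ℝ) → Prop}
  {u : ℕ → X}

def distVector (T : X → X) (x y : X) : Fin 5 → ℝ :=
  ![dist x y, dist y (T y), dist x (T x), dist x (T y), dist y (T x)]

theorem distVector_nonneg (T : X → X) (x y : X) : 0 ≤ distVector T x y := fun i => by
  fin_cases i <;> exact dist_nonneg

def IsSuzukiContraction (T : X → X) (α : ℝ) (R : ℝ → (Fin 5 → ℝ) → Prop) : Prop :=
  ∀ x y, α * dist x (T x) ≤ dist x y → R (dist (T x) (T y)) (distVector T x y)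

theorem IsControlRelation.eq_zero_of_tendsto_dist (hR : IsControlRelation R)
    (hT : IsSuzukiContraction T α R) {a b : ℕ → X} {ε : ℝ}
    (ha : Tendsto (fun n => dist (a n) (T (a n))) atTop (𝓝 0))
    (hb : Tendsto (fun n => dist (b n) (T (b n))) atTop (𝓝 0))
    (hab : Tendsto (fun n => dist (a n) (b n)) atTop (𝓝 ε)) : ε = 0 := by
  have hε : 0 ≤ ε := ge_of_tendsto' hab fun _ => dist_nonneg
  by_contra hne
  have hcond : ∀ᶠ n in atTop, α * dist (a n) (T (a n)) ≤ dist (a n) (b n) :=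
    ((ha.const_mul α).eventually_lt hab (by simpa using lt_of_le_of_ne hε (Ne.symm hne))).mono
      fun _ => le_of_lt
  have hba : Tendsto (fun n => dist (b n) (a n)) atTop (𝓝 ε) := by
    simpa only [dist_comm] using hab
  have hvec : Tendsto (fun n => distVector T (a n) (b n)) atTop (𝓝 ![ε, 0, 0, ε, ε]) :=
    hab.matrixVecCons <| hb.matrixVecCons <| ha.matrixVecCons <|
      (hab.dist_congr (by simp) hb).matrixVecCons <|
      (hba.dist_congr (by simp) ha).matrixVecCons tendsto_const_nhds
  refine hne (hR.eq_zero_of_le_smul_one ε _ (fun i => ?_) (fun i => ?_) <|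
    hR.of_tendsto _ _ ε _ (fun _ => dist_nonneg) (fun n => distVector_nonneg T _ _)
      (hab.dist_congr ha hb) hvec (hcond.mono fun n => hT _ _)) <;>
  fin_cases i <;> simp [hε]

theorem IsControlRelation.isFixedPt_of_tendsto (hR : IsControlRelation R)
    (hT : IsSuzukiContraction T α R) {u : ℕ → X} {z : X} (hu : Tendsto u atTop (𝓝 z))
    (hd : Tendsto (fun n => dist (u n) (T (u n))) atTop (𝓝 0))
    (hfreq : ∃ᶠ n in atTop, α * dist (u n) (T (u n)) ≤ dist (u n) z) : IsFixedPt T z := by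
  obtain ⟨σ, hσ, hcond⟩ := extraction_of_frequently_atTop hfreq
  have hv : Tendsto (u ∘ σ) atTop (𝓝 z) := hu.comp hσ.tendsto_atTop
  have hdv : Tendsto (fun n => dist (u (σ n)) (T (u (σ n)))) atTop (𝓝 0) :=
    hd.comp hσ.tendsto_atTop
  have hTv : Tendsto (fun n => T (u (σ n))) atTop (𝓝 z) := hv.congr_dist hdv
  have hvec : Tendsto (fun n => distVector T (u (σ n)) z) atTop
      (𝓝 ![dist z z, dist z (T z), 0, dist z (T z), dist z z]) :=
    (hv.dist tendsto_const_nhds).matrixVecCons <| tendsto_const_nhds.matrixVecCons <|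
      hdv.matrixVecCons <| (hv.dist tendsto_const_nhds).matrixVecCons <|
      (tendsto_const_nhds.dist hTv).matrixVecCons tendsto_const_nhds
  have hD : dist z (T z) = 0 :=
    hR.eq_zero_of_le_smul_one _ _ (fun i => by fin_cases i <;> simp)
      (fun i => by fin_cases i <;> simp) <|
    hR.of_tendsto _ _ _ _ (fun _ => dist_nonneg) (fun n => distVector_nonneg T _ _)
      (hTv.dist tendsto_const_nhds) hvec (Eventually.of_forall fun n => hT _ _ (hcond n))
  exact (dist_eq_zero.1 hD).symm

theorem IsControlRelation.eq_of_isFixedPt (hR : IsControlRelation R)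
    (hT : IsSuzukiContraction T α R) {z w : X} (hz : IsFixedPt T z) (hw : IsFixedPt T w) :
    z = w :=
  dist_eq_zero.1 <| hR.eq_zero_of_tendsto_dist hT (a := fun _ => z) (b := fun _ => w)
    (by simp [hz.eq]) (by simp [hw.eq]) tendsto_const_nhds


theorem IsSuzukiContraction.rel_orbit (hT : IsSuzukiContraction T α R) (hα : α ≤ 1)
    (hu : ∀ n, u (n + 1) = T (u n)) (n : ℕ) :
    R (dist (u (n + 1)) (u (n + 2)))
      ![dist (u n) (u (n + 1)), dist (u (n + 1)) (u (n + 2)), dist (u n) (u (n + 1)),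
        dist (u n) (u (n + 2)), 0] := by
  have h := hT (u n) (u (n + 1)) (by rw [hu]; exact mul_le_of_le_one_left dist_nonneg hα)
  simpa [distVector, ← hu] using h

theorem IsControlRelation.antitone_dist_orbit (hR : IsControlRelation R)
    (hT : IsSuzukiContraction T α R) (hα : α ≤ 1) (hu : ∀ n, u (n + 1) = T (u n)) :
    Antitone fun n => dist (u n) (u (n + 1)) := by
  refine antitone_nat_of_succ_le fun n => ?_
  by_contra! hlt
  have htri := dist_triangle (u n) (u (n + 1)) (u (n + 2))
  have h0 := hR.eq_zero_of_le_smul_step _ _ (fun i => by fin_cases i <;> simp [dist_nonneg])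
    (fun i => by fin_cases i <;> simp <;> linarith) (hT.rel_orbit hα hu n)
  linarith [dist_nonneg (x := u n) (y := u (n + 1))]

theorem IsControlRelation.tendsto_dist_orbit (hR : IsControlRelation R)
    (hT : IsSuzukiContraction T α R) (hα : α ≤ 1) (hu : ∀ n, u (n + 1) = T (u n)) :
    Tendsto (fun n => dist (u n) (u (n + 1))) atTop (𝓝 0) := by
  set d := fun n => dist (u n) (u (n + 1))
  have hanti : Antitone d := hR.antitone_dist_orbit hT hα hu
  obtain ⟨r, hr⟩ : ∃ r, Tendsto d atTop (𝓝 r) :=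
    ⟨_, tendsto_atTop_ciInf hanti ⟨0, forall_mem_range.2 fun _ => dist_nonneg⟩⟩
  have hr0 : 0 ≤ r := ge_of_tendsto' hr fun _ => dist_nonneg
  have hbdd : ∀ n, dist (u n) (u (n + 2)) ∈ Icc 0 (2 * d 0) := fun n =>
    ⟨dist_nonneg, (dist_triangle _ (u (n + 1)) _).trans <| by
      linarith [hanti (Nat.zero_le n), hanti (Nat.zero_le (n + 1))]⟩
  obtain ⟨e, -, σ, hσ, he⟩ := tendsto_subseq_of_bounded (Metric.isBounded_Icc 0 (2 * d 0)) hbdd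
  have hdσ : Tendsto (fun j => d (σ j)) atTop (𝓝 r) := hr.comp hσ.tendsto_atTop
  have hdσ₁ : Tendsto (fun j => d (σ j + 1)) atTop (𝓝 r) :=
    (hr.comp (tendsto_add_atTop_nat 1)).comp hσ.tendsto_atTop
  have he0 : 0 ≤ e := ge_of_tendsto' he fun _ => dist_nonneg
  have he2r : e ≤ 2 * r :=
    le_of_tendsto_of_tendsto' he (by simpa [two_mul] using hdσ.add hdσ₁)
      fun j => dist_triangle _ (u (σ j + 1)) _
  have hrel : R r ![r, r, r, e, 0] :=
    hR.of_tendsto _ _ _ _ (fun _ => dist_nonneg)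
      (fun j i => by fin_cases i <;> simp [d, dist_nonneg]) hdσ₁
      (hdσ.matrixVecCons <| hdσ₁.matrixVecCons <| hdσ.matrixVecCons <| he.matrixVecCons <|
        tendsto_const_nhds.matrixVecCons tendsto_const_nhds)
      (Eventually.of_forall fun j => hT.rel_orbit hα hu (σ j))
  rw [← hR.eq_zero_of_le_smul_step r _ (fun i => by fin_cases i <;> simp [hr0, he0])
    (fun i => by fin_cases i <;> simp; linarith) hrel]
  exact hr

theorem frequently_le_dist_orbit (hα : α ≤ 1 / 2) (hu : ∀ n, u (n + 1) = T (u n))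
    (hanti : Antitone fun n => dist (u n) (u (n + 1))) (z : X) :
    ∃ᶠ n in atTop, α * dist (u n) (T (u n)) ≤ dist (u n) z := by
  refine frequently_atTop.2 fun N => ?_
  by_contra! h
  have h₀ := h N le_rfl
  have h₁ := h (N + 1) (Nat.le_succ N)
  rw [← hu] at h₀ h₁
  have htri := dist_triangle_right (u N) (u (N + 1)) z
  have hle : dist (u (N + 1)) (u (N + 1 + 1)) ≤ dist (u N) (u (N + 1)) := hanti (Nat.le_succ N)
  nlinarith [mul_le_mul_of_nonneg_right hα (add_nonneg (dist_nonneg (x := u N) (y := u (N + 1)))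
    (dist_nonneg (x := u (N + 1)) (y := u (N + 1 + 1))))]

theorem IsControlRelation.cauchySeq_orbit (hR : IsControlRelation R)
    (hT : IsSuzukiContraction T α R) (hα : α ≤ 1) (hu : ∀ n, u (n + 1) = T (u n)) :
    CauchySeq u := by
  have hanti : Antitone fun n => dist (u n) (u (n + 1)) := hR.antitone_dist_orbit hT hα hu
  have hd := hR.tendsto_dist_orbit hT hα hu
  rw [Metric.cauchySeq_iff']
  by_contra! h
  obtain ⟨ε, hε, hfar⟩ := h
  have hcross : ∀ N, ∃ i, ¬ ε ≤ dist (u (N + i)) (u N) ∧ ε ≤ dist (u (N + (i + 1))) (u N) :=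
    fun N => Nat.exists_not_and_succ_of_not_zero_of_exists (by simpa using hε) <| by
      obtain ⟨n, hn, hεn⟩ := hfar N
      exact ⟨n - N, by rwa [Nat.add_sub_cancel' hn]⟩
  choose i hi₀ hi₁ using hcross
  have hdm : Tendsto (fun N => dist (u (N + i N + 1)) (u (N + i N + 1 + 1))) atTop (𝓝 0) :=
    squeeze_zero (fun _ => dist_nonneg) (fun N => hanti (by omega)) hd
  refine hε.ne' <| hR.eq_zero_of_tendsto_dist hT (a := u) (b := fun N => u (N + i N + 1))
    (by simpa only [← hu] using hd) (by simpa only [← hu] using hdm) ?_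
  refine tendsto_of_tendsto_of_tendsto_of_le_of_le tendsto_const_nhds
    (by simpa using hd.add_const ε) (fun N => by rw [dist_comm]; exact hi₁ N) fun N => ?_
  have hnear : dist (u N) (u (N + i N)) < ε := by rw [dist_comm]; exact not_le.1 (hi₀ N)
  have hstep : dist (u (N + i N)) (u (N + i N + 1)) ≤ dist (u N) (u (N + 1)) :=
    hanti (Nat.le_add_right N (i N))
  linarith [dist_triangle (u N) (u (N + i N)) (u (N + i N + 1))]

theorem IsControlRelation.existsUnique_isFixedPt [CompleteSpace X] [Nonempty X]
    (hR : IsControlRelation R) (hT : IsSuzukiContraction T α R) (hα : α ≤ 1 / 2) :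
    ∃! z, IsFixedPt T z := by
  obtain ⟨x⟩ := ‹Nonempty X›
  let u : ℕ → X := fun n => T^[n] x
  have hu : ∀ n, u (n + 1) = T (u n) := fun n => iterate_succ_apply' T n x
  have hα₁ : α ≤ 1 := by linarith
  obtain ⟨z, hz⟩ := cauchySeq_tendsto_of_complete (hR.cauchySeq_orbit hT hα₁ hu)
  have hfix : IsFixedPt T z :=
    hR.isFixedPt_of_tendsto hT hz (by simpa only [← hu] using hR.tendsto_dist_orbit hT hα₁ hu)
      (frequently_le_dist_orbit hα hu (hR.antitone_dist_orbit hT hα₁ hu) z)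
  exact ⟨z, hfix, fun w hw => hR.eq_of_isFixedPt hT hw hfix⟩

end SuzukiContraction

theorem stmt_15_general {X : Type*} [MetricSpace X] [CompleteSpace X] [Nonempty X]
    (T : X → X) (α : ℝ) (hα : α ∈ Set.Ioc (0:ℝ) (1/2))
    (ψ : ℝ → ℝ)
    (hψc : ContinuousOn ψ (Set.Ici 0)) (hψm : MonotoneOn ψ (Set.Ici 0))
    (hψ0 : ∀ t, 0 ≤ t → (ψ t = 0 ↔ t = 0))
    (k : ℕ) (hk : 0 < k) (φ : (Fin k → ℝ) → ℝ)
    (hφ0 : φ 0 = 0)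
    (hφusc : ∀ (t : ℕ → Fin k → ℝ) (l : Fin k → ℝ),
      (∀ i, Tendsto (fun n => t n i) atTop (nhds (l i))) →
      Filter.limsup (fun n => φ (t n)) atTop ≤ φ l)
    (hφlt : ∀ s : Fin k → ℝ, (∀ i, 0 ≤ s i) → s ≠ 0 →
      φ s < ψ (Finset.univ.sup' ⟨⟨0, hk⟩, Finset.mem_univ _⟩ s))
    (g : Fin k → ℝ → ℝ → ℝ → ℝ → ℝ → ℝ)
    (hg_cont : ∀ i, Continuous
      (fun p : ℝ × ℝ × ℝ × ℝ × ℝ => g i p.1 p.2.1 p.2.2.1 p.2.2.2.1 p.2.2.2.2))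
    (hg_mono : ∀ i, ∀ x₁ x₂ x₃ x₄ x₅ y₁ y₂ y₃ y₄ y₅ : ℝ,
      0 ≤ x₁ → 0 ≤ x₂ → 0 ≤ x₃ → 0 ≤ x₄ → 0 ≤ x₅ →
      x₁ ≤ y₁ → x₂ ≤ y₂ → x₃ ≤ y₃ → x₄ ≤ y₄ → x₅ ≤ y₅ →
      g i x₁ x₂ x₃ x₄ x₅ ≤ g i y₁ y₂ y₃ y₄ y₅)
    (hg_subhom : ∀ i, ∀ a x₁ x₂ x₃ x₄ x₅ : ℝ, 0 ≤ a →
      0 ≤ x₁ → 0 ≤ x₂ → 0 ≤ x₃ → 0 ≤ x₄ → 0 ≤ x₅ →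
      g i (a * x₁) (a * x₂) (a * x₃) (a * x₄) (a * x₅) ≤ a * g i x₁ x₂ x₃ x₄ x₅)
    (hg2 : ∀ i, g i 1 1 1 1 1 ∈ Set.Ioc (0:ℝ) 1)
    (hg3 : ∀ i, g i 1 1 1 2 0 ∈ Set.Ioc (0:ℝ) 1)
    (hT : ∀ x y : X, α * dist x (T x) ≤ dist x y →
      ψ (dist (T x) (T y)) ≤
        φ (fun i => g i (dist x y) (dist y (T y)) (dist x (T x))
            (dist x (T y)) (dist y (T x)))) :
    ∃! a : X, T a = a := by
  have : Nonempty (Fin k) := ⟨⟨0, hk⟩⟩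
  let G : Fin k → (Fin 5 → ℝ) → ℝ := fun i p => g i (p 0) (p 1) (p 2) (p 3) (p 4)
  have hR : IsControlRelation fun b p => ψ b ≤ φ fun i => G i p :=
    isControlRelation_of_isAlteringDistance ⟨hψc, hψm, hψ0⟩ hφ0
      (fun t l h => hφusc t l (tendsto_pi_nhds.1 h)) hφlt
      (fun i => (hg_cont i).comp (f := fun p : Fin 5 → ℝ => (p 0, p 1, p 2, p 3, p 4))
        (by fun_prop))
      (fun i p hp q _ hpq => hg_mono i _ _ _ _ _ _ _ _ _ _ (hp 0) (hp 1) (hp 2) (hp 3) (hp 4)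
        (hpq 0) (hpq 1) (hpq 2) (hpq 3) (hpq 4))
      (fun i a ha p hp => hg_subhom i a _ _ _ _ _ ha (hp 0) (hp 1) (hp 2) (hp 3) (hp 4))
      (fun i => (hg2 i).2) (fun i => (hg3 i).2)
  exact hR.existsUnique_isFixedPt hT hα.2

theorem stmt_15 {X : Type*} [MetricSpace X] [CompleteSpace X] [Nonempty X]
    (T : X → X) (α : ℝ) (hα : α ∈ Set.Ioc (0:ℝ) (1/2))
    (ψ : ℝ → ℝ)
    (hψc : ContinuousOn ψ (Set.Ici 0)) (hψm : MonotoneOn ψ (Set.Ici 0))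
    (hψnn : ∀ t, 0 ≤ t → 0 ≤ ψ t) (hψ0 : ∀ t, 0 ≤ t → (ψ t = 0 ↔ t = 0))
    (k : ℕ) (hk : 0 < k) (φ : (Fin k → ℝ) → ℝ)
    (hφ0 : φ 0 = 0) (hφnn : ∀ s : Fin k → ℝ, 0 ≤ φ s)
    (hφusc : ∀ (t : ℕ → Fin k → ℝ) (l : Fin k → ℝ),
      (∀ i, Tendsto (fun n => t n i) atTop (nhds (l i))) →
      Filter.limsup (fun n => φ (t n)) atTop ≤ φ l)
    (hφlt : ∀ s : Fin k → ℝ, (∀ i, 0 ≤ s i) → s ≠ 0 →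
      φ s < ψ (Finset.univ.sup' ⟨⟨0, hk⟩, Finset.mem_univ _⟩ s))
    (g : Fin k → ℝ → ℝ → ℝ → ℝ → ℝ → ℝ)
    (hg_cont : ∀ i, Continuous
      (fun p : ℝ × ℝ × ℝ × ℝ × ℝ => g i p.1 p.2.1 p.2.2.1 p.2.2.2.1 p.2.2.2.2))
    (hg_mono : ∀ i, ∀ x₁ x₂ x₃ x₄ x₅ y₁ y₂ y₃ y₄ y₅ : ℝ,
      0 ≤ x₁ → 0 ≤ x₂ → 0 ≤ x₃ → 0 ≤ x₄ → 0 ≤ x₅ →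
      x₁ ≤ y₁ → x₂ ≤ y₂ → x₃ ≤ y₃ → x₄ ≤ y₄ → x₅ ≤ y₅ →
      g i x₁ x₂ x₃ x₄ x₅ ≤ g i y₁ y₂ y₃ y₄ y₅)
    (hg_subhom : ∀ i, ∀ a x₁ x₂ x₃ x₄ x₅ : ℝ, 0 ≤ a →
      0 ≤ x₁ → 0 ≤ x₂ → 0 ≤ x₃ → 0 ≤ x₄ → 0 ≤ x₅ →
      g i (a * x₁) (a * x₂) (a * x₃) (a * x₄) (a * x₅) ≤ a * g i x₁ x₂ x₃ x₄ x₅)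
    (hg1 : ∀ i, g i 1 1 1 0 2 ∈ Set.Ioc (0:ℝ) 1)
    (hg2 : ∀ i, g i 1 1 1 1 1 ∈ Set.Ioc (0:ℝ) 1)
    (hg3 : ∀ i, g i 1 1 1 2 0 ∈ Set.Ioc (0:ℝ) 1)
    (hT : ∀ x y : X, α * dist x (T x) ≤ dist x y →
      ψ (dist (T x) (T y)) ≤
        φ (fun i => g i (dist x y) (dist y (T y)) (dist x (T x))
            (dist x (T y)) (dist y (T x)))) :
    ∃! a : X, T a = a :=
  stmt_15_general T α hα ψ hψc hψm hψ0 k hk φ hφ0 hφusc hφlt g hg_cont hg_mono hg_subhom hg2 hg3 hT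
end

section
/- Under the hypotheses of the main theorem (complete metric space (X,d), α ∈ (0,1/2], ψ an altering distance, φ and g_1,...,g_k as above, and α·d(x,Tx) ≤ d(x,y) implies ψ(d(Tx,Ty)) ≤ φ(g_1(M_{xy}),...,g_k(M_{xy}))), the Picard orbit x_{n+1} = T x_n from any x_0 satisfies: d(x_{n+1}, x_{n+2}) < d(x_n, x_{n+1}) whenever d(x_n, x_{n+1}) > 0, and lim_{n→∞} d(x_n, x_{n+1}) = 0. -/
/-!
Write `d n = d(xₙ, xₙ₊₁)`. Since `α ≤ 1`, the pair `(xₙ, xₙ₊₁)` satisfies the premise of the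
contraction condition, and `M_{xₙ xₙ₊₁} = (d n, d (n+1), d n, d(xₙ, xₙ₊₂), 0)` with
`d(xₙ, xₙ₊₂) ≤ d n + d (n+1)`. Monotonicity and subhomogeneity of `gᵢ` together with
`gᵢ(1,1,1,2,0) ≤ 1` bound every argument of `φ` by `max (d n) (d (n+1))`, so `d n ≤ d (n+1)` with
`d (n+1) > 0` would give `ψ (d (n+1)) ≤ φ (…) < ψ (d (n+1))`. Hence `d` decreases to some `r`.
If `r > 0`, pass to a subsequence along which `d(xₙ, xₙ₊₂)` converges to some `L ≤ 2r`; upper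
semicontinuity of `φ` and continuity of the `gᵢ` give `ψ r ≤ φ (g (r, r, r, L, 0)) < ψ r`.
-/

open Filter Topology

def MonotoneOnOrthant (G : ℝ → ℝ → ℝ → ℝ → ℝ → ℝ) : Prop :=
  ∀ x₁ x₂ x₃ x₄ x₅ y₁ y₂ y₃ y₄ y₅ : ℝ,
    0 ≤ x₁ → 0 ≤ x₂ → 0 ≤ x₃ → 0 ≤ x₄ → 0 ≤ x₅ →
    x₁ ≤ y₁ → x₂ ≤ y₂ → x₃ ≤ y₃ → x₄ ≤ y₄ → x₅ ≤ y₅ →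
    G x₁ x₂ x₃ x₄ x₅ ≤ G y₁ y₂ y₃ y₄ y₅

def Subhomogeneous (G : ℝ → ℝ → ℝ → ℝ → ℝ → ℝ) : Prop :=
  ∀ a x₁ x₂ x₃ x₄ x₅ : ℝ, 0 ≤ a →
    0 ≤ x₁ → 0 ≤ x₂ → 0 ≤ x₃ → 0 ≤ x₄ → 0 ≤ x₅ →
    G (a * x₁) (a * x₂) (a * x₃) (a * x₄) (a * x₅) ≤ a * G x₁ x₂ x₃ x₄ x₅

section Gauge

variable {G : ℝ → ℝ → ℝ → ℝ → ℝ → ℝ}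

theorem nonneg_of_monotoneOnOrthant_of_subhomogeneous (hmono : MonotoneOnOrthant G)
    (hsub : Subhomogeneous G) {v₁ v₂ v₃ v₄ v₅ : ℝ} (h₁ : 0 ≤ v₁) (h₂ : 0 ≤ v₂) (h₃ : 0 ≤ v₃)
    (h₄ : 0 ≤ v₄) (h₅ : 0 ≤ v₅) : 0 ≤ G v₁ v₂ v₃ v₄ v₅ := by
  have hle : G v₁ v₂ v₃ v₄ v₅ ≤ G (2 * v₁) (2 * v₂) (2 * v₃) (2 * v₄) (2 * v₅) :=
    hmono _ _ _ _ _ _ _ _ _ _ h₁ h₂ h₃ h₄ h₅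
      (by linarith) (by linarith) (by linarith) (by linarith) (by linarith)
  linarith [hsub 2 v₁ v₂ v₃ v₄ v₅ zero_le_two h₁ h₂ h₃ h₄ h₅]

theorem le_of_monotoneOnOrthant_of_subhomogeneous (hmono : MonotoneOnOrthant G)
    (hsub : Subhomogeneous G) (hG : G 1 1 1 2 0 ≤ 1) {a b c m : ℝ} (ha : 0 ≤ a) (hb : 0 ≤ b)
    (hc : 0 ≤ c) (ham : a ≤ m) (hbm : b ≤ m) (hcm : c ≤ 2 * m) : G a b a c 0 ≤ m := by
  have hm : 0 ≤ m := ha.trans ham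
  calc G a b a c 0 ≤ G m m m (2 * m) 0 :=
        hmono _ _ _ _ _ _ _ _ _ _ ha hb ha hc le_rfl ham hbm ham hcm le_rfl
    _ = G (m * 1) (m * 1) (m * 1) (m * 2) (m * 0) := by rw [mul_one, mul_zero, mul_comm m 2]
    _ ≤ m * G 1 1 1 2 0 :=
        hsub m 1 1 1 2 0 hm zero_le_one zero_le_one zero_le_one zero_le_two le_rfl
    _ ≤ m := mul_le_of_le_one_right hm hG

end Gauge

section Comparison

variable {ι : Type*} {ψ : ℝ → ℝ} {φ : (ι → ℝ) → ℝ}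

theorem phi_lt_psi_of_forall_le_s16 [Fintype ι] (hι : (Finset.univ : Finset ι).Nonempty)
    (hψm : MonotoneOn ψ (Set.Ici 0)) (hψ0 : ∀ t, 0 ≤ t → (ψ t = 0 ↔ t = 0)) (hφ0 : φ 0 = 0)
    (hφlt : ∀ s : ι → ℝ, (∀ i, 0 ≤ s i) → s ≠ 0 → φ s < ψ (Finset.univ.sup' hι s))
    {s : ι → ℝ} {m : ℝ} (hs0 : ∀ i, 0 ≤ s i) (hsm : ∀ i, s i ≤ m) (hm : 0 < m) :
    φ s < ψ m := by
  obtain rfl | hs := eq_or_ne s 0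
  · have hψ_le : ψ 0 ≤ ψ m := hψm Set.self_mem_Ici hm.le hm.le
    rw [(hψ0 0 le_rfl).2 rfl] at hψ_le
    rw [hφ0]
    exact hψ_le.lt_of_ne (Ne.symm ((hψ0 m hm.le).not.2 hm.ne'))
  · obtain ⟨i₀, hi₀⟩ := id hι
    have hsup : 0 ≤ Finset.univ.sup' hι s := Finset.le_sup'_of_le s hi₀ (hs0 i₀)
    exact (hφlt s hs0 hs).trans_le (hψm hsup hm.le (Finset.sup'_le _ _ fun i _ => hsm i))

theorem le_apply_of_tendsto_of_forall_le
    (hφusc : ∀ (t : ℕ → ι → ℝ) (l : ι → ℝ),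
      (∀ i, Tendsto (fun n => t n i) atTop (𝓝 (l i))) →
      limsup (fun n => φ (t n)) atTop ≤ φ l)
    {v : ℕ → ι → ℝ} {l : ι → ℝ} (hv : ∀ i, Tendsto (fun n => v n i) atTop (𝓝 (l i)))
    {c B : ℝ} (hc : ∀ n, c ≤ φ (v n)) (hB : ∀ n, φ (v n) ≤ B) : c ≤ φ l :=
  (le_limsup_of_frequently_le (Frequently.of_forall hc) (isBoundedUnder_of ⟨B, hB⟩)).trans
    (hφusc v l hv)

theorem phi_orbit_lt_psi [Fintype ι] (hι : (Finset.univ : Finset ι).Nonempty)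
    (hψm : MonotoneOn ψ (Set.Ici 0)) (hψ0 : ∀ t, 0 ≤ t → (ψ t = 0 ↔ t = 0)) (hφ0 : φ 0 = 0)
    (hφlt : ∀ s : ι → ℝ, (∀ i, 0 ≤ s i) → s ≠ 0 → φ s < ψ (Finset.univ.sup' hι s))
    {g : ι → ℝ → ℝ → ℝ → ℝ → ℝ → ℝ} (hg_mono : ∀ i, MonotoneOnOrthant (g i))
    (hg_subhom : ∀ i, Subhomogeneous (g i)) (hg_le : ∀ i, g i 1 1 1 2 0 ≤ 1)
    {a b c m : ℝ} (ha : 0 ≤ a) (hb : 0 ≤ b) (hc : 0 ≤ c) (ham : a ≤ m) (hbm : b ≤ m)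
    (hcm : c ≤ 2 * m) (hm : 0 < m) : φ (fun i => g i a b a c 0) < ψ m :=
  phi_lt_psi_of_forall_le_s16 hι hψm hψ0 hφ0 hφlt
    (fun i => nonneg_of_monotoneOnOrthant_of_subhomogeneous (hg_mono i) (hg_subhom i)
      ha hb ha hc le_rfl)
    (fun i => le_of_monotoneOnOrthant_of_subhomogeneous (hg_mono i) (hg_subhom i) (hg_le i)
      ha hb hc ham hbm hcm)
    hm

theorem tendsto_zero_of_psi_le_phi [Fintype ι] (hι : (Finset.univ : Finset ι).Nonempty)
    (hψm : MonotoneOn ψ (Set.Ici 0)) (hψ0 : ∀ t, 0 ≤ t → (ψ t = 0 ↔ t = 0)) (hφ0 : φ 0 = 0)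
    (hφusc : ∀ (t : ℕ → ι → ℝ) (l : ι → ℝ),
      (∀ i, Tendsto (fun n => t n i) atTop (𝓝 (l i))) →
      limsup (fun n => φ (t n)) atTop ≤ φ l)
    (hφlt : ∀ s : ι → ℝ, (∀ i, 0 ≤ s i) → s ≠ 0 → φ s < ψ (Finset.univ.sup' hι s))
    {g : ι → ℝ → ℝ → ℝ → ℝ → ℝ → ℝ}
    (hg_cont : ∀ i, Continuous
      (fun p : ℝ × ℝ × ℝ × ℝ × ℝ => g i p.1 p.2.1 p.2.2.1 p.2.2.2.1 p.2.2.2.2))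
    (hg_mono : ∀ i, MonotoneOnOrthant (g i)) (hg_subhom : ∀ i, Subhomogeneous (g i))
    (hg_le : ∀ i, g i 1 1 1 2 0 ≤ 1) {d D : ℕ → ℝ} (hd : Antitone d) (hd0 : ∀ n, 0 ≤ d n)
    (hD0 : ∀ n, 0 ≤ D n) (hD : ∀ n, D n ≤ d n + d (n + 1))
    (h : ∀ n, ψ (d (n + 1)) ≤ φ (fun i => g i (d n) (d (n + 1)) (d n) (D n) 0)) :
    Tendsto d atTop (𝓝 0) := by
  obtain ⟨r, hr⟩ : ∃ r, Tendsto d atTop (𝓝 r) :=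
    ⟨_, tendsto_atTop_ciInf hd ⟨0, Set.forall_mem_range.2 hd0⟩⟩
  have hrd : ∀ n, r ≤ d n := hd.le_of_tendsto hr
  obtain rfl | hr_pos := (ge_of_tendsto' hr hd0).eq_or_lt
  · exact hr
  exfalso
  have hD_le (n : ℕ) : D n ≤ 2 * d 0 := by
    linarith [hD n, hd (Nat.zero_le n), hd (Nat.zero_le (n + 1))]
  obtain ⟨L, -, σ, hσ, hDσ⟩ :=
    (isCompact_Icc (a := 0) (b := 2 * d 0)).tendsto_subseq fun n => ⟨hD0 n, hD_le n⟩
  have hdσ : Tendsto (fun j => d (σ j)) atTop (𝓝 r) := hr.comp hσ.tendsto_atTop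
  have hdσ1 : Tendsto (fun j => d (σ j + 1)) atTop (𝓝 r) :=
    ((tendsto_add_atTop_iff_nat 1).2 hr).comp hσ.tendsto_atTop
  have hL0 : 0 ≤ L := ge_of_tendsto' hDσ fun j => hD0 (σ j)
  have hL : L ≤ 2 * r :=
    le_of_tendsto_of_tendsto' hDσ (by simpa only [two_mul] using hdσ.add hdσ1) fun j => hD (σ j)
  have hlim (i : ι) : Tendsto (fun j => g i (d (σ j)) (d (σ j + 1)) (d (σ j)) (D (σ j)) 0)
      atTop (𝓝 (g i r r r L 0)) :=
    (hg_cont i).continuousAt.tendsto.comp <| hdσ.prodMk_nhds <| hdσ1.prodMk_nhds <|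
      hdσ.prodMk_nhds <| hDσ.prodMk_nhds tendsto_const_nhds
  -- the real `limsup` only has its meaning for sequences bounded above
  have hbdd (n : ℕ) : φ (fun i => g i (d n) (d (n + 1)) (d n) (D n) 0) ≤ ψ (d 0 + 1) :=
    (phi_orbit_lt_psi hι hψm hψ0 hφ0 hφlt hg_mono hg_subhom hg_le (hd0 _) (hd0 _) (hD0 _)
      (by linarith [hd (Nat.zero_le n)]) (by linarith [hd (Nat.zero_le (n + 1))])
      (by linarith [hD_le n, hd0 0]) (by linarith [hd0 0])).le
  have hψ_le : ψ r ≤ φ (fun i => g i r r r L 0) :=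
    le_apply_of_tendsto_of_forall_le hφusc hlim
      (fun j => (hψm hr_pos.le (hd0 _) (hrd _)).trans (h (σ j))) fun j => hbdd (σ j)
  exact hψ_le.not_gt <| phi_orbit_lt_psi hι hψm hψ0 hφ0 hφlt hg_mono hg_subhom hg_le
    hr_pos.le hr_pos.le hL0 le_rfl le_rfl hL hr_pos

end Comparison

theorem psi_dist_le_of_orbit {X ι : Type*} [MetricSpace X] {T : X → X} {α : ℝ} (hα : α ≤ 1)
    {ψ : ℝ → ℝ} {φ : (ι → ℝ) → ℝ} {g : ι → ℝ → ℝ → ℝ → ℝ → ℝ → ℝ}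
    (hT : ∀ x y : X, α * dist x (T x) ≤ dist x y →
      ψ (dist (T x) (T y)) ≤
        φ (fun i => g i (dist x y) (dist y (T y)) (dist x (T x))
            (dist x (T y)) (dist y (T x))))
    {x : ℕ → X} (hx : ∀ n, x (n + 1) = T (x n)) (n : ℕ) :
    ψ (dist (x (n + 1)) (x (n + 2))) ≤
      φ (fun i => g i (dist (x n) (x (n + 1))) (dist (x (n + 1)) (x (n + 2)))
        (dist (x n) (x (n + 1))) (dist (x n) (x (n + 2))) 0) := by
  have h := hT (x n) (x (n + 1)) (by rw [← hx n]; exact mul_le_of_le_one_left dist_nonneg hα)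
  rw [← hx n, ← hx (n + 1), dist_self] at h
  exact h

theorem stmt_16_general {X : Type*} [MetricSpace X]
    (T : X → X) (α : ℝ) (hα : α ∈ Set.Ioc (0:ℝ) (1/2))
    (ψ : ℝ → ℝ)
    (hψm : MonotoneOn ψ (Set.Ici 0))
    (hψ0 : ∀ t, 0 ≤ t → (ψ t = 0 ↔ t = 0))
    (k : ℕ) (hk : 0 < k) (φ : (Fin k → ℝ) → ℝ)
    (hφ0 : φ 0 = 0)
    (hφusc : ∀ (t : ℕ → Fin k → ℝ) (l : Fin k → ℝ),
      (∀ i, Tendsto (fun n => t n i) atTop (nhds (l i))) →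
      Filter.limsup (fun n => φ (t n)) atTop ≤ φ l)
    (hφlt : ∀ s : Fin k → ℝ, (∀ i, 0 ≤ s i) → s ≠ 0 →
      φ s < ψ (Finset.univ.sup' ⟨⟨0, hk⟩, Finset.mem_univ _⟩ s))
    (g : Fin k → ℝ → ℝ → ℝ → ℝ → ℝ → ℝ)
    (hg_cont : ∀ i, Continuous
      (fun p : ℝ × ℝ × ℝ × ℝ × ℝ => g i p.1 p.2.1 p.2.2.1 p.2.2.2.1 p.2.2.2.2))
    (hg_mono : ∀ i, ∀ x₁ x₂ x₃ x₄ x₅ y₁ y₂ y₃ y₄ y₅ : ℝ,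
      0 ≤ x₁ → 0 ≤ x₂ → 0 ≤ x₃ → 0 ≤ x₄ → 0 ≤ x₅ →
      x₁ ≤ y₁ → x₂ ≤ y₂ → x₃ ≤ y₃ → x₄ ≤ y₄ → x₅ ≤ y₅ →
      g i x₁ x₂ x₃ x₄ x₅ ≤ g i y₁ y₂ y₃ y₄ y₅)
    (hg_subhom : ∀ i, ∀ a x₁ x₂ x₃ x₄ x₅ : ℝ, 0 ≤ a →
      0 ≤ x₁ → 0 ≤ x₂ → 0 ≤ x₃ → 0 ≤ x₄ → 0 ≤ x₅ →
      g i (a * x₁) (a * x₂) (a * x₃) (a * x₄) (a * x₅) ≤ a * g i x₁ x₂ x₃ x₄ x₅)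
    (hg3 : ∀ i, g i 1 1 1 2 0 ∈ Set.Ioc (0:ℝ) 1)
    (hT : ∀ x y : X, α * dist x (T x) ≤ dist x y →
      ψ (dist (T x) (T y)) ≤
        φ (fun i => g i (dist x y) (dist y (T y)) (dist x (T x))
            (dist x (T y)) (dist y (T x))))
    (x : ℕ → X) (hx : ∀ n, x (n + 1) = T (x n)) :
    (∀ n, 0 < dist (x n) (x (n + 1)) →
      dist (x (n + 1)) (x (n + 2)) < dist (x n) (x (n + 1))) ∧
    Tendsto (fun n => dist (x n) (x (n + 1))) atTop (nhds 0) := by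
  let d : ℕ → ℝ := fun n => dist (x n) (x (n + 1))
  have hι : (Finset.univ : Finset (Fin k)).Nonempty := ⟨⟨0, hk⟩, Finset.mem_univ _⟩
  have hg_le (i : Fin k) : g i 1 1 1 2 0 ≤ 1 := (hg3 i).2
  have hψd := psi_dist_le_of_orbit (hα.2.trans (by norm_num)) hT hx
  have hD (n : ℕ) : dist (x n) (x (n + 2)) ≤ d n + d (n + 1) := dist_triangle _ _ _
  have hstep (n : ℕ) (hn : 0 < d (n + 1)) : d (n + 1) < d n := by
    by_contra! h
    exact (hψd n).not_gt <| phi_orbit_lt_psi hι hψm hψ0 hφ0 hφlt hg_mono hg_subhom hg_le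
      dist_nonneg dist_nonneg dist_nonneg h le_rfl (by linarith [hD n]) hn
  have hanti : Antitone d := antitone_nat_of_succ_le fun n =>
    le_of_not_gt fun h => (hstep n (dist_nonneg.trans_lt h)).not_gt h
  refine ⟨fun n hn => (hanti n.le_succ).lt_of_ne fun h => (hstep n (hn.trans_eq h.symm)).ne h, ?_⟩
  exact tendsto_zero_of_psi_le_phi hι hψm hψ0 hφ0 hφusc hφlt hg_cont hg_mono hg_subhom hg_le
    (D := fun n => dist (x n) (x (n + 2))) hanti (fun _ => dist_nonneg) (fun _ => dist_nonneg)
    hD hψd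

theorem stmt_16 {X : Type*} [MetricSpace X] [CompleteSpace X] [Nonempty X]
    (T : X → X) (α : ℝ) (hα : α ∈ Set.Ioc (0:ℝ) (1/2))
    (ψ : ℝ → ℝ)
    (hψc : ContinuousOn ψ (Set.Ici 0)) (hψm : MonotoneOn ψ (Set.Ici 0))
    (hψnn : ∀ t, 0 ≤ t → 0 ≤ ψ t) (hψ0 : ∀ t, 0 ≤ t → (ψ t = 0 ↔ t = 0))
    (k : ℕ) (hk : 0 < k) (φ : (Fin k → ℝ) → ℝ)
    (hφ0 : φ 0 = 0) (hφnn : ∀ s : Fin k → ℝ, 0 ≤ φ s)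
    (hφusc : ∀ (t : ℕ → Fin k → ℝ) (l : Fin k → ℝ),
      (∀ i, Tendsto (fun n => t n i) atTop (nhds (l i))) →
      Filter.limsup (fun n => φ (t n)) atTop ≤ φ l)
    (hφlt : ∀ s : Fin k → ℝ, (∀ i, 0 ≤ s i) → s ≠ 0 →
      φ s < ψ (Finset.univ.sup' ⟨⟨0, hk⟩, Finset.mem_univ _⟩ s))
    (g : Fin k → ℝ → ℝ → ℝ → ℝ → ℝ → ℝ)
    (hg_cont : ∀ i, Continuous
      (fun p : ℝ × ℝ × ℝ × ℝ × ℝ => g i p.1 p.2.1 p.2.2.1 p.2.2.2.1 p.2.2.2.2))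
    (hg_mono : ∀ i, ∀ x₁ x₂ x₃ x₄ x₅ y₁ y₂ y₃ y₄ y₅ : ℝ,
      0 ≤ x₁ → 0 ≤ x₂ → 0 ≤ x₃ → 0 ≤ x₄ → 0 ≤ x₅ →
      x₁ ≤ y₁ → x₂ ≤ y₂ → x₃ ≤ y₃ → x₄ ≤ y₄ → x₅ ≤ y₅ →
      g i x₁ x₂ x₃ x₄ x₅ ≤ g i y₁ y₂ y₃ y₄ y₅)
    (hg_subhom : ∀ i, ∀ a x₁ x₂ x₃ x₄ x₅ : ℝ, 0 ≤ a →
      0 ≤ x₁ → 0 ≤ x₂ → 0 ≤ x₃ → 0 ≤ x₄ → 0 ≤ x₅ →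
      g i (a * x₁) (a * x₂) (a * x₃) (a * x₄) (a * x₅) ≤ a * g i x₁ x₂ x₃ x₄ x₅)
    (hg1 : ∀ i, g i 1 1 1 0 2 ∈ Set.Ioc (0:ℝ) 1)
    (hg2 : ∀ i, g i 1 1 1 1 1 ∈ Set.Ioc (0:ℝ) 1)
    (hg3 : ∀ i, g i 1 1 1 2 0 ∈ Set.Ioc (0:ℝ) 1)
    (hT : ∀ x y : X, α * dist x (T x) ≤ dist x y →
      ψ (dist (T x) (T y)) ≤
        φ (fun i => g i (dist x y) (dist y (T y)) (dist x (T x))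
            (dist x (T y)) (dist y (T x))))
    (x : ℕ → X) (hx : ∀ n, x (n + 1) = T (x n)) :
    (∀ n, 0 < dist (x n) (x (n + 1)) →
      dist (x (n + 1)) (x (n + 2)) < dist (x n) (x (n + 1))) ∧
    Tendsto (fun n => dist (x n) (x (n + 1))) atTop (nhds 0) :=
  stmt_16_general T α hα ψ hψm hψ0 k hk φ hφ0 hφusc hφlt g hg_cont hg_mono hg_subhom hg3 hT x hx
end

section
/- Let (X,d) be a complete metric space, β ∈ (0,1), and T : X → X a mapping such that ∫_0^{d(Tx,Ty)} f(t) dt ≤ β·∫_0^{d(x,y)} f(t) dt for all x, y ∈ X, where f : [0,∞) → (0,∞) is Lebesgue integrable on every compact subset of [0,∞) and ∫_0^ε f(t) dt > 0 for every ε > 0. Then T has a unique fixed point a ∈ X, and T^n x → a for every x ∈ X. -/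
open Filter MeasureTheory intervalIntegral

/-!
With `F r = ∫ t in 0..r, f t`, which is nondecreasing, continuous and positive on `(0, ∞)`, the
hypothesis reads `F (d (T x) (T y)) ≤ β F (d x y)`. This makes `T` nonexpansive with at most one
fixed point, and `F` of the consecutive orbit distances decays like `β ^ n`, so these distances
tend to `0`. The orbit is Cauchy: given `ε > 0`, continuity of `F` at `ε` gives `δ` with
`β F ε < F (ε - δ)`; once the steps are shorter than `δ`, `T` maps points within `ε` of `T^[n] x`
to points within `ε - δ` of `T^[n+1] x`, hence within `ε` of `T^[n] x` again.
-/

open Set Topology Function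

section Gauge

variable {X : Type*} [MetricSpace X] {F : ℝ → ℝ} {β : ℝ} {T : X → X}

theorem dist_map_le_of_gauge (hF_mono : MonotoneOn F (Ici 0)) (hF_pos : ∀ r, 0 < r → 0 < F r)
    (hβ : β < 1) (hT : ∀ x y, F (dist (T x) (T y)) ≤ β * F (dist x y)) (x y : X) :
    dist (T x) (T y) ≤ dist x y := by
  rcases eq_or_ne x y with rfl | hxy
  · simp
  by_contra! h
  have hpos := hF_pos _ (dist_pos.2 hxy)
  have := hF_mono dist_nonneg dist_nonneg h.le
  nlinarith [hT x y]

theorem eq_of_isFixedPt_of_gauge (hF_pos : ∀ r, 0 < r → 0 < F r) (hβ : β < 1)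
    (hT : ∀ x y, F (dist (T x) (T y)) ≤ β * F (dist x y)) {a b : X}
    (ha : IsFixedPt T a) (hb : IsFixedPt T b) : a = b := by
  by_contra hab
  have hpos := hF_pos _ (dist_pos.2 hab)
  have := hT a b
  rw [ha.eq, hb.eq] at this
  nlinarith

theorem gauge_dist_iterate_succ_le (hβ : 0 ≤ β)
    (hT : ∀ x y, F (dist (T x) (T y)) ≤ β * F (dist x y)) (x : X) (n : ℕ) :
    F (dist (T^[n + 1] x) (T^[n] x)) ≤ β ^ n * F (dist (T x) x) := by
  induction n with
  | zero => simp
  | succ n ih =>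
    calc F (dist (T^[n + 2] x) (T^[n + 1] x))
        = F (dist (T (T^[n + 1] x)) (T (T^[n] x))) := by
          simp only [iterate_succ_apply']
      _ ≤ β * F (dist (T^[n + 1] x) (T^[n] x)) := hT _ _
      _ ≤ β ^ (n + 1) * F (dist (T x) x) := by
          rw [pow_succ', mul_assoc]; exact mul_le_mul_of_nonneg_left ih hβ

theorem tendsto_zero_of_gauge_le (hF_mono : MonotoneOn F (Ici 0))
    (hF_pos : ∀ r, 0 < r → 0 < F r) {u v : ℕ → ℝ} (hu : ∀ n, 0 ≤ u n)
    (huv : ∀ n, F (u n) ≤ v n) (hv : Tendsto v atTop (𝓝 0)) :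
    Tendsto u atTop (𝓝 0) := by
  refine tendsto_order.2 ⟨fun a ha => .of_forall fun n => ha.trans_le (hu n), fun ε hε => ?_⟩
  filter_upwards [hv.eventually (gt_mem_nhds (hF_pos ε hε))] with n hn
  exact hF_mono.reflect_lt (hu n) hε.le ((huv n).trans_lt hn)

theorem tendsto_dist_iterate_succ_of_gauge (hF_mono : MonotoneOn F (Ici 0))
    (hF_pos : ∀ r, 0 < r → 0 < F r) (hβ : β ∈ Ico 0 1)
    (hT : ∀ x y, F (dist (T x) (T y)) ≤ β * F (dist x y)) (x : X) :
    Tendsto (fun n => dist (T^[n + 1] x) (T^[n] x)) atTop (𝓝 0) := by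
  refine tendsto_zero_of_gauge_le hF_mono hF_pos (fun n => dist_nonneg)
    (gauge_dist_iterate_succ_le hβ.1 hT x) ?_
  simpa using (tendsto_pow_atTop_nhds_zero_of_lt_one hβ.1 hβ.2).mul_const (F (dist (T x) x))

theorem exists_lt_gauge_sub (hF_cont : ContinuousOn F (Ioi 0)) {ε c : ℝ} (hε : 0 < ε)
    (hc : c < F ε) : ∃ δ, 0 < δ ∧ δ < ε ∧ c < F (ε - δ) := by
  have hlim : Tendsto (fun δ => F (ε - δ)) (𝓝[>] 0) (𝓝 (F ε)) := by
    refine ((hF_cont.continuousAt (Ioi_mem_nhds hε)).tendsto.comp ?_).mono_left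
      nhdsWithin_le_nhds
    simpa using (continuous_sub_left ε).tendsto 0
  have h : ∀ᶠ δ in 𝓝[>] 0, 0 < δ ∧ δ < ε ∧ c < F (ε - δ) := by
    filter_upwards [self_mem_nhdsWithin, nhdsWithin_le_nhds (gt_mem_nhds hε),
      hlim.eventually (lt_mem_nhds hc)] with δ hδ hδε hcδ using ⟨hδ, hδε, hcδ⟩
  exact h.exists

theorem dist_iterate_add_lt_of_gauge (hF_mono : MonotoneOn F (Ici 0)) (hβ : 0 ≤ β)
    (hT : ∀ x y, F (dist (T x) (T y)) ≤ β * F (dist x y)) {x : X} {ε δ : ℝ} {N : ℕ}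
    (hε : 0 < ε) (hδε : δ < ε) (hgap : β * F ε < F (ε - δ))
    (hN : ∀ n ≥ N, dist (T^[n + 1] x) (T^[n] x) < δ) (k : ℕ) :
    ∀ n ≥ N, dist (T^[n + k] x) (T^[n] x) < ε := by
  induction k with
  | zero => simpa using fun _ _ => hε
  | succ k ih =>
    intro n hn
    have hstep : dist (T^[n + k + 1] x) (T^[n + 1] x) < ε - δ := by
      refine hF_mono.reflect_lt dist_nonneg (sub_nonneg.2 hδε.le) ?_
      calc F (dist (T^[n + k + 1] x) (T^[n + 1] x))
          = F (dist (T (T^[n + k] x)) (T (T^[n] x))) := by simp only [iterate_succ_apply']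
        _ ≤ β * F (dist (T^[n + k] x) (T^[n] x)) := hT _ _
        _ ≤ β * F ε := mul_le_mul_of_nonneg_left
            (hF_mono dist_nonneg hε.le (ih n hn).le) hβ
        _ < F (ε - δ) := hgap
    calc dist (T^[n + (k + 1)] x) (T^[n] x)
        ≤ dist (T^[n + k + 1] x) (T^[n + 1] x) + dist (T^[n + 1] x) (T^[n] x) :=
          dist_triangle _ _ _
      _ < ε - δ + δ := add_lt_add hstep (hN n hn)
      _ = ε := sub_add_cancel ε δ

theorem cauchySeq_iterate_of_gauge (hF_mono : MonotoneOn F (Ici 0))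
    (hF_cont : ContinuousOn F (Ioi 0)) (hF_pos : ∀ r, 0 < r → 0 < F r) (hβ : β ∈ Ico 0 1)
    (hT : ∀ x y, F (dist (T x) (T y)) ≤ β * F (dist x y)) (x : X) :
    CauchySeq fun n => T^[n] x := by
  refine Metric.cauchySeq_iff'.2 fun ε hε => ?_
  have hβF : β * F ε < F ε := by nlinarith [hF_pos ε hε, hβ.2]
  obtain ⟨δ, hδ, hδε, hgap⟩ := exists_lt_gauge_sub hF_cont hε hβF
  obtain ⟨N, hN⟩ := eventually_atTop.1 <|
    (tendsto_dist_iterate_succ_of_gauge hF_mono hF_pos hβ hT x).eventually (gt_mem_nhds hδ)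
  refine ⟨N, fun m hm => ?_⟩
  obtain ⟨k, rfl⟩ := Nat.exists_eq_add_of_le hm
  exact dist_iterate_add_lt_of_gauge hF_mono hβ.1 hT hε hδε hgap hN k N le_rfl

theorem exists_isFixedPt_tendsto_iterate_of_gauge [CompleteSpace X] [Nonempty X]
    (hF_mono : MonotoneOn F (Ici 0)) (hF_cont : ContinuousOn F (Ioi 0))
    (hF_pos : ∀ r, 0 < r → 0 < F r) (hβ : β ∈ Ico 0 1)
    (hT : ∀ x y, F (dist (T x) (T y)) ≤ β * F (dist x y)) :
    ∃ a, IsFixedPt T a ∧ (∀ b, IsFixedPt T b → b = a) ∧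
      ∀ x, Tendsto (fun n => T^[n] x) atTop (𝓝 a) := by
  have hcont : Continuous T :=
    (LipschitzWith.of_dist_le_mul (K := 1) fun x y => by
      simpa using dist_map_le_of_gauge hF_mono hF_pos hβ.2 hT x y).continuous
  have horbit : ∀ x, ∃ a, IsFixedPt T a ∧ Tendsto (fun n => T^[n] x) atTop (𝓝 a) := fun x =>
    let ⟨a, ha⟩ := cauchySeq_tendsto_of_complete (cauchySeq_iterate_of_gauge hF_mono hF_cont
      hF_pos hβ hT x)
    ⟨a, isFixedPt_of_tendsto_iterate ha hcont.continuousAt, ha⟩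
  obtain ⟨a, ha, -⟩ := horbit (Classical.arbitrary X)
  have huniq : ∀ b, IsFixedPt T b → b = a := fun b hb =>
    eq_of_isFixedPt_of_gauge hF_pos hβ.2 hT hb ha
  refine ⟨a, ha, huniq, fun x => ?_⟩
  obtain ⟨b, hb, hxb⟩ := horbit x
  rwa [huniq b hb] at hxb

end Gauge

section Primitive

variable {f : ℝ → ℝ}

theorem integrableOn_uIcc_zero (hf_int : ∀ b, 0 ≤ b → IntegrableOn f (Icc 0 b)) {b : ℝ}
    (hb : 0 ≤ b) : IntegrableOn f (uIcc 0 b) := by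
  rw [uIcc_of_le hb]
  exact hf_int b hb

theorem monotoneOn_integral_of_nonneg (hf_int : ∀ b, 0 ≤ b → IntegrableOn f (Icc 0 b))
    (hf_nonneg : ∀ t, 0 ≤ t → 0 ≤ f t) : MonotoneOn (fun r => ∫ t in (0:ℝ)..r, f t) (Ici 0) :=
  fun _ hr _ hs hrs => integral_mono_interval le_rfl hr hrs
    ((ae_restrict_mem measurableSet_Ioc).mono fun t ht => hf_nonneg t ht.1.le)
    (integrableOn_uIcc_zero hf_int hs).intervalIntegrable

theorem continuousOn_integral_Ioi (hf_int : ∀ b, 0 ≤ b → IntegrableOn f (Icc 0 b)) :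
    ContinuousOn (fun r => ∫ t in (0:ℝ)..r, f t) (Ioi 0) := fun r (hr : 0 < r) => by
  have hcont := continuousOn_primitive_interval (integrableOn_uIcc_zero hf_int (b := r + 1)
    (by linarith))
  refine (hcont.continuousAt ?_).continuousWithinAt
  rw [uIcc_of_le (by linarith)]
  exact Icc_mem_nhds hr (by linarith)

end Primitive

theorem stmt_17 {X : Type*} [MetricSpace X] [CompleteSpace X] [Nonempty X]
    (β : ℝ) (hβ : β ∈ Set.Ioo (0:ℝ) 1)
    (f : ℝ → ℝ)
    (hf_pos : ∀ t, 0 ≤ t → 0 < f t)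
    (hf_int : ∀ b : ℝ, 0 ≤ b → IntegrableOn f (Set.Icc 0 b))
    (hf_eps : ∀ ε : ℝ, 0 < ε → 0 < ∫ t in (0:ℝ)..ε, f t)
    (T : X → X)
    (hT : ∀ x y : X,
      (∫ t in (0:ℝ)..(dist (T x) (T y)), f t) ≤ β * ∫ t in (0:ℝ)..(dist x y), f t) :
    ∃ a : X, T a = a ∧ (∀ b : X, T b = b → b = a) ∧
      ∀ x : X, Tendsto (fun n => T^[n] x) atTop (nhds a) :=
  exists_isFixedPt_tendsto_iterate_of_gauge
    (monotoneOn_integral_of_nonneg hf_int fun t ht => (hf_pos t ht).le)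
    (continuousOn_integral_Ioi hf_int) hf_eps (Ioo_subset_Ico_self hβ) hT
end
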